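/- arXiv:1406.6839 — 7 statements merged into one kernel-verified Lean document; each statement's English description precedes it below -/
import Mathlib

section
/- Let κ be an infinite cardinal, X a set, and 𝒜 a collection of subsets of X such that every point of X belongs to at most κ members of 𝒜. Then the number of finite minimal covers of X by elements of 𝒜 is at most κ. -/
open Set Cardinal

/-!
Induct on the size of the cover. Fix a point `y` of the set `Y` to be covered. A minimal cover
`𝒲` of `Y` contains some `A ∋ y`, and `𝒲 \ {A}` is a minimal cover of `Y \ A` with one member
fewer; so `𝒲 ↦ (A, 𝒲 \ {A})` shows that the minimal covers of `Y` of size `n + 1` number at most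
`ord(y, 𝒜) · κ ≤ κ`. Summing over the `ℵ₀` possible sizes keeps the count at most `κ`.
-/

universe u v

theorem mk_iUnion_le_of_le {α : Type u} {ι : Type v} {κ : Cardinal.{u}} (hκ : ℵ₀ ≤ κ)
    (hι : lift.{u} #ι ≤ lift.{v} κ) (f : ι → Set α) (hf : ∀ i, #(f i) ≤ κ) :
    #(⋃ i, f i) ≤ κ := by
  rw [← lift_le.{v}]
  calc lift.{v} #(⋃ i, f i) ≤ lift.{u} #ι * ⨆ i, lift.{v} #(f i) := mk_iUnion_le_lift f
    _ ≤ lift.{v} κ * lift.{v} κ := mul_le_mul' hι (ciSup_le' fun i => lift_le.2 (hf i))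
    _ = lift.{v} κ := mul_eq_self (aleph0_le_lift.2 hκ)

section

variable {X : Type*}

theorem eq_empty_of_minimal_cover_empty {𝒲 : Set (Set X)}
    (h : Minimal ((∅ : Set X) ⊆ ⋃₀ ·) 𝒲) : 𝒲 = ∅ :=
  subset_empty_iff.1 (h.2 (empty_subset _) (empty_subset _))

theorem Minimal.cover_diff_singleton {Y A : Set X} {𝒲 : Set (Set X)}
    (h : Minimal (Y ⊆ ⋃₀ ·) 𝒲) (hA : A ∈ 𝒲) : Minimal (Y \ A ⊆ ⋃₀ ·) (𝒲 \ {A}) := by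
  refine minimal_iff_forall_lt.2 ⟨?_, fun 𝒱 h𝒱 hcov => ?_⟩
  · rintro z ⟨hzY, hzA⟩
    obtain ⟨B, hB, hzB⟩ := h.1 hzY
    exact ⟨B, ⟨hB, by rintro rfl; exact hzA hzB⟩, hzB⟩
  · have hlt : insert A 𝒱 < 𝒲 := by
      obtain ⟨B, ⟨hB, hBA⟩, hB𝒱⟩ := exists_of_ssubset h𝒱
      refine (ssubset_iff_of_subset (insert_subset hA (h𝒱.1.trans sdiff_subset))).2 ⟨B, hB, ?_⟩
      rintro (rfl | hB')
      exacts [hBA rfl, hB𝒱 hB']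
    refine minimal_iff_forall_lt.1 h |>.2 hlt fun z hz => ?_
    by_cases hzA : z ∈ A
    · exact ⟨A, mem_insert _ _, hzA⟩
    · obtain ⟨B, hB, hzB⟩ := hcov ⟨hz, hzA⟩
      exact ⟨B, mem_insert_of_mem _ hB, hzB⟩

def minimalCovers (𝒜 : Set (Set X)) (Y : Set X) (n : ℕ) : Set (Set (Set X)) :=
  {𝒲 | 𝒲 ⊆ 𝒜 ∧ 𝒲.encard = n ∧ Minimal (Y ⊆ ⋃₀ ·) 𝒲}

theorem minimalCovers_succ_subset {𝒜 : Set (Set X)} {Y : Set X} {y : X} (hy : y ∈ Y) (n : ℕ) :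
    minimalCovers 𝒜 Y (n + 1) ⊆
      ⋃ A : {A // A ∈ 𝒜 ∧ y ∈ A}, insert A.1 '' minimalCovers 𝒜 (Y \ A) n := by
  rintro 𝒲 ⟨h𝒜, hcard, hmin⟩
  obtain ⟨A, hA, hyA⟩ := hmin.1 hy
  refine mem_iUnion.2 ⟨⟨A, h𝒜 hA, hyA⟩, 𝒲 \ {A}, ⟨sdiff_subset.trans h𝒜, ?_,
    hmin.cover_diff_singleton hA⟩, insert_sdiff_singleton.trans (insert_eq_of_mem hA)⟩
  rw [← encard_sdiff_singleton_add_one hA, Nat.cast_add, Nat.cast_one] at hcard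
  exact WithTop.add_right_cancel ENat.one_ne_top hcard

theorem mk_minimalCovers_le {κ : Cardinal} (hκ : ℵ₀ ≤ κ) {𝒜 : Set (Set X)}
    (hord : ∀ x : X, #{A : Set X // A ∈ 𝒜 ∧ x ∈ A} ≤ κ) (n : ℕ) (Y : Set X) :
    #(minimalCovers 𝒜 Y n) ≤ κ := by
  have hκ₁ : (1 : Cardinal) ≤ κ := one_le_aleph0.trans hκ
  induction n generalizing Y with
  | zero =>
    refine (mk_le_mk_of_subset (t := {∅}) ?_).trans (by simpa using hκ₁)
    rintro 𝒲 ⟨-, hcard, -⟩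
    simpa using hcard
  | succ n ih =>
    obtain rfl | ⟨y, hy⟩ := Y.eq_empty_or_nonempty
    · refine (mk_le_mk_of_subset (t := {∅}) ?_).trans (by simpa using hκ₁)
      rintro 𝒲 ⟨-, -, hmin⟩
      exact eq_empty_of_minimal_cover_empty hmin
    · refine (mk_le_mk_of_subset (minimalCovers_succ_subset hy n)).trans ?_
      exact mk_iUnion_le_of_le hκ (by simpa using hord y) _
        fun A => mk_image_le.trans (ih _)

end

/-- **Miščenko's lemma.** If every point of `X` lies in at most `κ` members of `𝒜`
(`κ` infinite), then the number of finite minimal covers of `X` by elements of `𝒜`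
is at most `κ`. -/
theorem miscenko {X : Type*} (κ : Cardinal) (hκ : ℵ₀ ≤ κ)
    (𝒜 : Set (Set X)) (hord : ∀ x : X, #{A : Set X // A ∈ 𝒜 ∧ x ∈ A} ≤ κ) :
    #{𝒲 : Set (Set X) // 𝒲 ⊆ 𝒜 ∧ 𝒲.Finite ∧ ⋃₀ 𝒲 = Set.univ ∧
        ∀ 𝒲' ⊂ 𝒲, ⋃₀ 𝒲' ≠ Set.univ} ≤ κ := by
  have hsub : {𝒲 : Set (Set X) | 𝒲 ⊆ 𝒜 ∧ 𝒲.Finite ∧ ⋃₀ 𝒲 = Set.univ ∧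
      ∀ 𝒲' ⊂ 𝒲, ⋃₀ 𝒲' ≠ Set.univ} ⊆ ⋃ n : ℕ, minimalCovers 𝒜 univ n := by
    rintro 𝒲 ⟨h𝒜, hfin, hcov, hmin⟩
    refine mem_iUnion.2 ⟨𝒲.ncard, h𝒜, hfin.cast_ncard_eq.symm, minimal_iff_forall_lt.2
      ⟨hcov.ge, fun 𝒲' hlt h𝒲' => hmin 𝒲' hlt (univ_subset_iff.1 h𝒲')⟩⟩
  exact (mk_le_mk_of_subset hsub).trans <|
    mk_iUnion_le_of_le hκ (by simpa using hκ) _ fun n => mk_minimalCovers_le hκ hord n univ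
end

section
/- Let X be a topological space, Z ⊆ X, and κ an infinite cardinal. Suppose there is a family 𝒱 of open subsets of X such that for every z ∈ Z, ord(z, 𝒱) ≤ κ and ⋂{V ∈ 𝒱 : z ∈ V} = {z}. Then for every compact subset K of Z, there is a family 𝒪 of open subsets of X with |𝒪| ≤ κ and ⋂𝒪 = K; i.e., ψ(K, X) ≤ κ. -/
open Set Cardinal

attribute [local instance] Classical.propDecidable

/-- `R` is a minimal (irreducible) finite cover of `Y` by members of `𝒱`. -/
def MinCover {X : Type*} (𝒱 : Set (Set X)) (Y : Set X) (R : Finset (Set X)) : Prop :=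
  ↑R ⊆ 𝒱 ∧ Y ⊆ ⋃₀ ↑R ∧ ∀ V ∈ R, ¬ Y ⊆ ⋃₀ ↑(R.erase V)

/-- Mishchenko's lemma: a point-`κ` family has at most `κ` minimal covers of size `n`
of any subset of `Z`. -/
lemma mishchenko {X : Type*} (𝒱 : Set (Set X)) (Z : Set X) (κ : Cardinal) (hκ : ℵ₀ ≤ κ)
    (hord : ∀ z ∈ Z, #{V : Set X // V ∈ 𝒱 ∧ z ∈ V} ≤ κ) :
    ∀ n : ℕ, ∀ Y : Set X, Y ⊆ Z →
      #{R : Finset (Set X) | MinCover 𝒱 Y R ∧ R.card = n} ≤ κ := by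
  intro n
  induction n with
  | zero =>
    intro Y hYZ
    have hsub : {R : Finset (Set X) | MinCover 𝒱 Y R ∧ R.card = 0} ⊆ {(∅ : Finset (Set X))} := by
      intro R ⟨_, hc⟩
      simpa [Finset.card_eq_zero] using hc
    calc #{R : Finset (Set X) | MinCover 𝒱 Y R ∧ R.card = 0}
        ≤ #({(∅ : Finset (Set X))} : Set (Finset (Set X))) := Cardinal.mk_le_mk_of_subset hsub
      _ = 1 := Cardinal.mk_singleton _
      _ ≤ κ := le_trans (by norm_num) hκ
  | succ n IH =>
    intro Y hYZ
    rcases Y.eq_empty_or_nonempty with rfl | ⟨x, hxY⟩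
    · have hsub : {R : Finset (Set X) | MinCover 𝒱 (∅ : Set X) R ∧ R.card = n + 1} ⊆ ∅ := by
        intro R ⟨⟨_, _, hmin⟩, hc⟩
        obtain ⟨V, hV⟩ := Finset.card_pos.mp (by omega : 0 < R.card)
        exact absurd (empty_subset _) (hmin V hV)
      calc #{R : Finset (Set X) | MinCover 𝒱 (∅ : Set X) R ∧ R.card = n + 1}
          ≤ #(∅ : Set (Finset (Set X))) := Cardinal.mk_le_mk_of_subset hsub
        _ ≤ κ := by simp
    · have hxZ : x ∈ Z := hYZ hxY
      -- every minimal cover of size n+1 is `insert V R'` for some V ∋ x and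
      -- R' a minimal cover of Y \ V of size n
      have hsub : {R : Finset (Set X) | MinCover 𝒱 Y R ∧ R.card = n + 1} ⊆
          ⋃ (V : {V : Set X // V ∈ 𝒱 ∧ x ∈ V}),
            (fun R' : Finset (Set X) => insert (↑V) R') ''
              {R' : Finset (Set X) | MinCover 𝒱 (Y \ ↑V) R' ∧ R'.card = n} := by
        rintro R ⟨⟨hRV, hRcov, hRmin⟩, hRcard⟩
        obtain ⟨V, hVR, hxV⟩ := Set.mem_sUnion.mp (hRcov hxY)
        have hVR' : V ∈ R := hVR
        refine Set.mem_iUnion.mpr ⟨⟨V, hRV hVR, hxV⟩, R.erase V, ⟨⟨?_, ?_, ?_⟩, ?_⟩, ?_⟩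
        · exact Subset.trans (by exact_mod_cast Finset.coe_subset.mpr (Finset.erase_subset V R)) hRV
        · rintro y ⟨hyY, hyV⟩
          obtain ⟨W, hWR, hyW⟩ := Set.mem_sUnion.mp (hRcov hyY)
          have hWne : W ≠ V := fun h => hyV (h ▸ hyW)
          exact Set.mem_sUnion.mpr ⟨W, by
            exact_mod_cast Finset.mem_erase.mpr ⟨hWne, hWR⟩, hyW⟩
        · intro W hW hcon
          apply hRmin W (Finset.mem_of_mem_erase hW)
          intro y hyY
          by_cases hyV : y ∈ V
          · exact Set.mem_sUnion.mpr ⟨V, by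
              exact_mod_cast Finset.mem_erase.mpr
                ⟨Ne.symm (Finset.mem_erase.mp hW).1, hVR'⟩, hyV⟩
          · obtain ⟨U, hU, hyU⟩ := Set.mem_sUnion.mp (hcon ⟨hyY, hyV⟩)
            have hU' : U ∈ (R.erase V).erase W := hU
            refine Set.mem_sUnion.mpr ⟨U, ?_, hyU⟩
            exact_mod_cast Finset.mem_erase.mpr
              ⟨(Finset.mem_erase.mp hU').1, Finset.mem_of_mem_erase (Finset.mem_of_mem_erase hU')⟩
        · rw [Finset.card_erase_of_mem hVR']; omega
        · exact Finset.insert_erase hVR'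
      calc #{R : Finset (Set X) | MinCover 𝒱 Y R ∧ R.card = n + 1}
          ≤ #(⋃ (V : {V : Set X // V ∈ 𝒱 ∧ x ∈ V}),
              (fun R' : Finset (Set X) => insert (↑V) R') ''
                {R' : Finset (Set X) | MinCover 𝒱 (Y \ ↑V) R' ∧ R'.card = n}) :=
            Cardinal.mk_le_mk_of_subset hsub
        _ ≤ #{V : Set X // V ∈ 𝒱 ∧ x ∈ V} * ⨆ (V : {V : Set X // V ∈ 𝒱 ∧ x ∈ V}),
              #((fun R' : Finset (Set X) => insert (↑V) R') ''
                {R' : Finset (Set X) | MinCover 𝒱 (Y \ ↑V) R' ∧ R'.card = n}) :=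
            Cardinal.mk_iUnion_le _
        _ ≤ κ * κ := by
            refine mul_le_mul' (hord x hxZ) (ciSup_le' fun V => ?_)
            exact le_trans (Cardinal.mk_image_le)
              (IH (Y \ ↑V) (Subset.trans Set.diff_subset hYZ))
        _ = κ := Cardinal.mul_eq_self hκ

/-- If `psw_e(Z, X) ≤ κ` (witnessed by a family `𝒱` of open sets of `X` such that each
`z ∈ Z` lies in at most `κ` members of `𝒱` and the members of `𝒱` containing `z`
intersect in `{z}`), then the pseudocharacter of `X` at every compact subset `K ⊆ Z`
is at most `κ`. -/
theorem psi_compact_le_of_pswe {X : Type*} [TopologicalSpace X]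
    (Z : Set X) (κ : Cardinal) (hκ : ℵ₀ ≤ κ)
    (𝒱 : Set (Set X)) (h𝒱open : ∀ V ∈ 𝒱, IsOpen V)
    (hord : ∀ z ∈ Z, #{V : Set X // V ∈ 𝒱 ∧ z ∈ V} ≤ κ)
    (hsep : ∀ z ∈ Z, ⋂₀ {V ∈ 𝒱 | z ∈ V} = {z}) :
    ∀ K ⊆ Z, IsCompact K →
      ∃ 𝒪 : Set (Set X), (∀ O ∈ 𝒪, IsOpen O) ∧ #𝒪 ≤ κ ∧ ⋂₀ 𝒪 = K := by
  classical
  intro K hKZ hK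
  set M : Set (Finset (Set X)) := {R | MinCover 𝒱 K R} with hM
  refine ⟨(fun R : Finset (Set X) => ⋃₀ ↑R) '' M, ?_, ?_, ?_⟩
  · rintro O ⟨R, hR, rfl⟩
    exact isOpen_sUnion fun V hV => h𝒱open V (hR.1 hV)
  · -- cardinality bound
    have hMU : M = ⋃ (n : ULift.{_} ℕ), {R : Finset (Set X) | MinCover 𝒱 K R ∧ R.card = n.down} := by
      ext R
      simp only [Set.mem_iUnion, Set.mem_setOf_eq, hM]
      exact ⟨fun h => ⟨⟨R.card⟩, h, rfl⟩, fun ⟨n, h, _⟩ => h⟩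
    refine le_trans Cardinal.mk_image_le ?_
    calc #M
        = #(⋃ (n : ULift.{_} ℕ), {R : Finset (Set X) | MinCover 𝒱 K R ∧ R.card = n.down}) := by
          rw [hMU]
      _ ≤ #(ULift.{_} ℕ) * ⨆ (n : ULift.{_} ℕ),
            #{R : Finset (Set X) | MinCover 𝒱 K R ∧ R.card = n.down} :=
          Cardinal.mk_iUnion_le _
      _ ≤ ℵ₀ * κ := by
          refine mul_le_mul' (by simp) (ciSup_le' fun n => ?_)
          exact mishchenko 𝒱 Z κ hκ hord n.down K hKZ
      _ ≤ κ * κ := mul_le_mul' hκ le_rfl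
      _ = κ := Cardinal.mul_eq_self hκ
  · -- intersection equals K
    apply subset_antisymm
    · intro y hy
      by_contra hyK
      -- build an open cover of K avoiding y
      have hcov : ∀ z ∈ K, ∃ V : Set X, (V ∈ 𝒱 ∧ z ∈ V) ∧ y ∉ V := by
        intro z hz
        have hy' : y ∉ ({z} : Set X) := fun h => hyK (h ▸ hz)
        rw [← hsep z (hKZ hz)] at hy'
        have := by simpa [Set.mem_sInter, not_forall] using hy'
        obtain ⟨V, hV, hzV, hyV⟩ := this
        exact ⟨V, ⟨hV, hzV⟩, hyV⟩
      set ι := {V : Set X // V ∈ 𝒱 ∧ y ∉ V} with hι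
      have hKcov : K ⊆ ⋃ (i : ι), (i : Set X) := by
        intro z hz
        obtain ⟨V, ⟨hV𝒱, hzV⟩, hyV⟩ := hcov z hz
        exact Set.mem_iUnion.mpr ⟨⟨V, hV𝒱, hyV⟩, hzV⟩
      obtain ⟨t, ht⟩ := hK.elim_finite_subcover (fun i : ι => (i : Set X))
        (fun i => h𝒱open i i.2.1) hKcov
      set R₀ : Finset (Set X) := t.image (fun i : ι => (i : Set X)) with hR₀
      have hR₀cov : K ⊆ ⋃₀ ↑R₀ := by
        intro z hz
        obtain ⟨i, hit, hzi⟩ := Set.mem_iUnion₂.mp (ht hz)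
        exact Set.mem_sUnion.mpr ⟨↑i, by
          exact_mod_cast Finset.mem_image_of_mem _ hit, hzi⟩
      have hR₀prop : ∀ V ∈ R₀, V ∈ 𝒱 ∧ y ∉ V := by
        intro V hV
        obtain ⟨i, _, rfl⟩ := Finset.mem_image.mp hV
        exact i.2
      -- choose a minimal subcover
      set T : Finset (Finset (Set X)) := R₀.powerset.filter (fun S => K ⊆ ⋃₀ ↑S) with hT
      have hR₀T : R₀ ∈ T := Finset.mem_filter.mpr ⟨Finset.mem_powerset_self _, hR₀cov⟩
      obtain ⟨S, hST, hSmin⟩ := T.exists_min_image Finset.card ⟨R₀, hR₀T⟩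
      have hSsub : S ⊆ R₀ := Finset.mem_powerset.mp (Finset.mem_filter.mp hST).1
      have hScov : K ⊆ ⋃₀ ↑S := (Finset.mem_filter.mp hST).2
      have hSM : S ∈ M := by
        refine ⟨fun V hV => (hR₀prop V (hSsub hV)).1, hScov, ?_⟩
        intro V hV hcon
        have hET : S.erase V ∈ T := Finset.mem_filter.mpr
          ⟨Finset.mem_powerset.mpr (Subset.trans (Finset.erase_subset V S) hSsub), hcon⟩
        have := hSmin _ hET
        have := Finset.card_erase_lt_of_mem hV
        omega
      have hyS : y ∈ ⋃₀ ↑S := hy _ ⟨S, hSM, rfl⟩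
      obtain ⟨V, hVS, hyV⟩ := Set.mem_sUnion.mp hyS
      exact (hR₀prop V (hSsub hVS)).2 hyV
    · intro z hz O hO
      rcases hO with ⟨R, hR, rfl⟩
      exact hR.2.1 hz
end

section
/- Let X be a topological space, Z ⊆ X, and κ an infinite cardinal with psw_e(Z, X) ≤ κ. Then every compact subset K of Z has weight w(K) ≤ κ. -/
open Set Cardinal TopologicalSpace

universe u

lemma mk_finite_subsets_le {β : Type*} (S : Set β) (κ : Cardinal) (hκ : ℵ₀ ≤ κ)
    (hS : #S ≤ κ) : #{f : Set β | f.Finite ∧ f ⊆ S} ≤ κ := by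
  have hsurj : Function.Surjective
      (fun F : Finset S => (⟨Subtype.val '' ↑F, (F.finite_toSet.image _), by
        rintro x ⟨y, _, rfl⟩; exact y.2⟩ : {f : Set β | f.Finite ∧ f ⊆ S})) := by
    rintro ⟨f, hfin, hsub⟩
    have hpre : (Subtype.val ⁻¹' f : Set S).Finite :=
      hfin.preimage (Subtype.val_injective.injOn)
    refine ⟨hpre.toFinset, ?_⟩
    ext x
    simp only [Set.Finite.coe_toFinset, Set.mem_image, Set.mem_preimage]
    constructor
    · rintro ⟨y, hy, rfl⟩; exact hy
    · intro hx; exact ⟨⟨x, hsub hx⟩, hx, rfl⟩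
  refine le_trans (Cardinal.mk_le_of_surjective hsurj) ?_
  rcases finite_or_infinite S with h | h
  · haveI := Fintype.ofFinite S
    exact le_trans (Cardinal.lt_aleph0_of_finite _).le hκ
  · rw [Cardinal.mk_finset_of_infinite]; exact hS

lemma mk_finsets_le {β : Type*} (S : Set β) (κ : Cardinal) (hκ : ℵ₀ ≤ κ)
    (hS : #S ≤ κ) : #{F : Finset β | ↑F ⊆ S} ≤ κ := by
  refine le_trans (Cardinal.mk_le_of_injective (f := fun F : {F : Finset β // ↑F ⊆ S} =>
    (⟨(F.1 : Set β), F.1.finite_toSet, F.2⟩ : {f : Set β | f.Finite ∧ f ⊆ S})) ?_)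
    (mk_finite_subsets_le S κ hκ hS)
  rintro ⟨F, hF⟩ ⟨G, hG⟩ h
  simpa [Subtype.ext_iff, Finset.coe_inj] using h


lemma exists_minimal_subcover' {β : Type u} [DecidableEq (Set β)] (C : Finset (Set β))
    (hC : ⋃₀ (C : Set (Set β)) = Set.univ) :
    ∃ D ⊆ C, ⋃₀ (D : Set (Set β)) = Set.univ ∧
      ∀ A ∈ D, ⋃₀ ((D.erase A : Finset (Set β)) : Set (Set β)) ≠ Set.univ := by
  induction C using Finset.strongInductionOn with
  | _ C ih =>
    by_cases h : ∃ A ∈ C, ⋃₀ ((C.erase A : Finset (Set β)) : Set (Set β)) = Set.univ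
    · obtain ⟨A, hA, hcov⟩ := h
      obtain ⟨D, hD, h1, h2⟩ := ih (C.erase A) (Finset.erase_ssubset hA) hcov
      exact ⟨D, hD.trans (Finset.erase_subset _ _), h1, h2⟩
    · push_neg at h
      exact ⟨C, le_refl _, hC, h⟩

lemma exists_small_separating {β : Type u} [TopologicalSpace β] [CompactSpace β] [Nonempty β]
    (𝒜 : Set (Set β)) (κ : Cardinal.{u}) (hκ : ℵ₀ ≤ κ)
    (h𝒜o : ∀ A ∈ 𝒜, IsOpen A)
    (hord : ∀ x : β, #{A : Set β // A ∈ 𝒜 ∧ x ∈ A} ≤ κ)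
    (hsep : ∀ x y : β, x ≠ y → ∃ A ∈ 𝒜, x ∈ A ∧ y ∉ A) :
    ∃ 𝒲 ⊆ 𝒜, #𝒲 ≤ κ ∧ ∀ x y : β, x ≠ y → ∃ W ∈ 𝒲, x ∈ W ∧ y ∉ W := by
  classical
  -- the witness point function
  set p : Finset (Set β) → β := fun F =>
    if h : (⋃₀ (F : Set (Set β)))ᶜ.Nonempty then h.choose else Classical.arbitrary β with hp
  have hpmem : ∀ F : Finset (Set β), ⋃₀ (F : Set (Set β)) ≠ Set.univ →
      p F ∉ ⋃₀ (F : Set (Set β)) := by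
    intro F hF
    have h : (⋃₀ (F : Set (Set β)))ᶜ.Nonempty := Set.nonempty_compl.2 hF
    have := h.choose_spec
    simp only [hp, dif_pos h]
    exact this
  -- the tree of partial covers
  let g : ℕ → Set (Finset (Set β)) := fun n => Nat.rec {∅}
    (fun _ gn => gn ∪ {F' | ∃ F ∈ gn, ∃ A, (A ∈ 𝒜 ∧ p F ∈ A) ∧ F' = insert A F}) n
  have hg0 : g 0 = {∅} := rfl
  have hgsucc : ∀ n, g (n+1) = g n ∪
      {F' | ∃ F ∈ g n, ∃ A, (A ∈ 𝒜 ∧ p F ∈ A) ∧ F' = insert A F} := fun n => rfl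
  -- cardinality of each level
  have hgcard : ∀ n, #↥(g n) ≤ κ := by
    intro n
    induction n with
    | zero =>
        rw [hg0]
        simpa using (Cardinal.one_le_aleph0.trans hκ)
    | succ n ih =>
        rw [hgsucc n]
        refine le_trans (Cardinal.mk_union_le _ _) ?_
        have h2 : #↥{F' : Finset (Set β) | ∃ F ∈ g n, ∃ A, (A ∈ 𝒜 ∧ p F ∈ A) ∧ F' = insert A F}
            ≤ κ := by
          have hsub : {F' : Finset (Set β) | ∃ F ∈ g n, ∃ A, (A ∈ 𝒜 ∧ p F ∈ A) ∧ F' = insert A F}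
              ⊆ Set.range (fun x : (Σ F : g n, {A : Set β // A ∈ 𝒜 ∧ p F.1 ∈ A}) =>
                insert x.2.1 x.1.1) := by
            rintro F' ⟨F, hF, A, hA, rfl⟩
            exact ⟨⟨⟨F, hF⟩, ⟨A, hA⟩⟩, rfl⟩
          refine le_trans (Cardinal.mk_le_mk_of_subset hsub) ?_
          refine le_trans Cardinal.mk_range_le ?_
          rw [Cardinal.mk_sigma]
          refine le_trans (Cardinal.sum_le_sum _ (fun _ => κ) (fun F => hord (p F.1))) ?_
          rw [Cardinal.sum_const']
          calc #↥(g n) * κ ≤ κ * κ := mul_le_mul_left ih κ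
            _ = κ := Cardinal.mul_eq_self hκ
        calc #↥(g n) + _ ≤ κ + κ := add_le_add ih h2
          _ = κ := Cardinal.add_eq_self hκ
  have hgmono : ∀ m n, m ≤ n → g m ⊆ g n := by
    intro m n h
    induction h with
    | refl => exact subset_rfl
    | step _ ih => rename_i k hk; exact ih.trans (by rw [hgsucc k]; exact Set.subset_union_left)
  -- every minimal cover appears in the tree
  have hmem : ∀ (C : Finset (Set β)), ↑C ⊆ 𝒜 → ⋃₀ (C : Set (Set β)) = Set.univ →
      (∀ A ∈ C, ⋃₀ ((C.erase A : Finset (Set β)) : Set (Set β)) ≠ Set.univ) →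
      ∀ (k n : ℕ) (F : Finset (Set β)), F ⊆ C → F ∈ g n → C.card - F.card = k →
      C ∈ g (n + k) := by
    intro C hC𝒜 hCcov hCmin k
    induction k with
    | zero =>
        intro n F hFC hFg hcard
        have : F = C := Finset.eq_of_subset_of_card_le hFC (by omega)
        subst this
        simpa using hFg
    | succ k ih =>
        intro n F hFC hFg hcard
        have hFlt : F.card < C.card := by
          have := Finset.card_le_card hFC
          omega
        have hne : F ≠ C := by rintro rfl; omega
        have hFncov : ⋃₀ (F : Set (Set β)) ≠ Set.univ := by
          obtain ⟨A, hAC, hAF⟩ : ∃ A ∈ C, A ∉ F := by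
            by_contra h
            push_neg at h
            exact hne (Finset.Subset.antisymm hFC h)
          intro hcov
          apply hCmin A hAC
          have hsub : (F : Set (Set β)) ⊆ ((C.erase A : Finset (Set β)) : Set (Set β)) := by
            intro B hB
            exact Finset.mem_coe.2 (Finset.mem_erase.2 ⟨fun h => hAF (h ▸ hB), hFC hB⟩)
          apply Set.univ_subset_iff.1
          rw [← hcov]
          exact Set.sUnion_subset_sUnion hsub
        have hpF := hpmem F hFncov
        have hpC : p F ∈ ⋃₀ (C : Set (Set β)) := by rw [hCcov]; trivial
        obtain ⟨A, hAC, hpA⟩ := hpC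
        have hAF : A ∉ F := fun h => hpF ⟨A, Finset.mem_coe.2 h, hpA⟩
        have hstep : insert A F ∈ g (n+1) := by
          rw [hgsucc n]
          exact Or.inr ⟨F, hFg, A, ⟨hC𝒜 hAC, hpA⟩, rfl⟩
        have hcard' : C.card - (insert A F).card = k := by
          rw [Finset.card_insert_of_notMem hAF]
          omega
        have := ih (n+1) (insert A F) (Finset.insert_subset (Finset.mem_coe.1 hAC) hFC) hstep hcard'
        have heq : n + 1 + k = n + (k + 1) := by omega
        rwa [heq] at this
  
  -- the set of minimal covers and the separating family
  let M : Set (Finset (Set β)) := {C | ↑C ⊆ 𝒜 ∧ ⋃₀ (C : Set (Set β)) = Set.univ ∧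
    ∀ A ∈ C, ⋃₀ ((C.erase A : Finset (Set β)) : Set (Set β)) ≠ Set.univ}
  have hMsub : M ⊆ ⋃ (n : ULift.{u} ℕ), g n.down := by
    intro C hC
    refine Set.mem_iUnion.2 ⟨⟨C.card⟩, ?_⟩
    have := hmem C hC.1 hC.2.1 hC.2.2 C.card 0 ∅ (Finset.empty_subset _)
      (by rw [hg0]; rfl) (by simp)
    simpa using this
  have hMcard : #↥M ≤ κ := by
    refine le_trans (Cardinal.mk_le_mk_of_subset hMsub) ?_
    refine le_trans (Cardinal.mk_iUnion_le _) ?_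
    have h1 : #(ULift.{u} ℕ) = ℵ₀ := Cardinal.mk_eq_aleph0 _
    have h2 : ⨆ (n : ULift.{u} ℕ), #↥(g n.down) ≤ κ := ciSup_le' (fun n => hgcard n.down)
    calc #(ULift.{u} ℕ) * ⨆ (n : ULift.{u} ℕ), #↥(g n.down) ≤ κ * κ := by
          exact mul_le_mul' (h1.le.trans hκ) h2
      _ = κ := Cardinal.mul_eq_self hκ
  let 𝒲 : Set (Set β) := ⋃ (C : M), ((C.1 : Finset (Set β)) : Set (Set β))
  have h𝒲𝒜 : 𝒲 ⊆ 𝒜 := by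
    rintro W hW
    obtain ⟨C, hWC⟩ := Set.mem_iUnion.1 hW
    exact C.2.1 hWC
  have h𝒲card : #↥𝒲 ≤ κ := by
    refine le_trans (Cardinal.mk_iUnion_le _) ?_
    have h2 : ⨆ (C : M), #↥((C.1 : Finset (Set β)) : Set (Set β)) ≤ ℵ₀ :=
      ciSup_le' (fun C => (C.1.finite_toSet).lt_aleph0.le)
    calc #↥M * ⨆ (C : M), #↥((C.1 : Finset (Set β)) : Set (Set β)) ≤ κ * κ :=
          mul_le_mul' hMcard (h2.trans hκ)
      _ = κ := Cardinal.mul_eq_self hκ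
  refine ⟨𝒲, h𝒲𝒜, h𝒲card, ?_⟩
  -- the separation property
  intro x y hxy
  have hf : ∀ z : β, ∃ A, A ∈ 𝒜 ∧ z ∈ A ∧ (z = y → x ∉ A) ∧ (z ≠ y → y ∉ A) := by
    intro z
    by_cases hz : z = y
    · subst hz
      obtain ⟨A, hA, h1, h2⟩ := hsep z x (Ne.symm hxy)
      exact ⟨A, hA, h1, fun _ => h2, fun h => absurd rfl h⟩
    · obtain ⟨A, hA, h1, h2⟩ := hsep z y hz
      exact ⟨A, hA, h1, fun h => absurd h hz, fun _ => h2⟩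
  choose f hf𝒜 hfz hfx hfy using hf
  obtain ⟨t, ht⟩ := IsCompact.elim_finite_subcover isCompact_univ f
    (fun z => h𝒜o _ (hf𝒜 z)) (fun z _ => Set.mem_iUnion.2 ⟨z, hfz z⟩)
  have hC₀cov : ⋃₀ ((t.image f : Finset (Set β)) : Set (Set β)) = Set.univ := by
    apply Set.eq_univ_of_univ_subset
    refine ht.trans ?_
    intro w hw
    obtain ⟨z, hz⟩ := Set.mem_iUnion.1 hw
    obtain ⟨hzt, hwz⟩ := by simpa using hz
    exact ⟨f z, by simp [Finset.coe_image]; exact ⟨z, hzt, rfl⟩, hwz⟩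
  obtain ⟨D, hDC₀, hDcov, hDmin⟩ := exists_minimal_subcover' (t.image f) hC₀cov
  have hDM : D ∈ M := by
    refine ⟨?_, hDcov, hDmin⟩
    intro A hA
    have : A ∈ t.image f := hDC₀ (Finset.mem_coe.1 hA)
    obtain ⟨z, _, rfl⟩ := Finset.mem_image.1 this
    exact hf𝒜 z
  have hxD : x ∈ ⋃₀ (D : Set (Set β)) := by rw [hDcov]; trivial
  obtain ⟨W, hWD, hxW⟩ := hxD
  obtain ⟨z, hzt, hzW⟩ := Finset.mem_image.1 (hDC₀ (Finset.mem_coe.1 hWD))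
  have hyW : y ∉ W := by
    by_cases hz : z = y
    · subst hz
      exact absurd hxW (by rw [← hzW]; exact hfx z rfl)
    · rw [← hzW]; exact hfy z hz
  exact ⟨W, Set.mem_iUnion.2 ⟨⟨D, hDM⟩, hWD⟩, hxW, hyW⟩
lemma basis_of_small_separating {β : Type u} [TopologicalSpace β] [CompactSpace β] [T2Space β]
    (𝒲 : Set (Set β)) (κ : Cardinal.{u}) (hκ : ℵ₀ ≤ κ) (h𝒲o : ∀ W ∈ 𝒲, IsOpen W)
    (h𝒲 : #𝒲 ≤ κ) (hsep : ∀ x y : β, x ≠ y → ∃ W ∈ 𝒲, x ∈ W ∧ y ∉ W) :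
    ∃ B : Set (Set β), IsTopologicalBasis B ∧ #B ≤ κ := by
  classical
  -- closed network property
  have hnet : ∀ (x : β) (U : Set β), IsOpen U → x ∈ U →
      ∃ F : Finset (Set β), ↑F ⊆ 𝒲 ∧ x ∈ (⋃₀ (F : Set (Set β)))ᶜ ∧
        (⋃₀ (F : Set (Set β)))ᶜ ⊆ U := by
    intro x U hU hxU
    have hW : ∀ z : β, ∃ W, (z ≠ x → W ∈ 𝒲 ∧ z ∈ W ∧ x ∉ W) ∧ (z = x → W = ∅) := by
      intro z
      by_cases hz : z = x
      · exact ⟨∅, fun h => absurd hz h, fun _ => rfl⟩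
      · obtain ⟨W, h1, h2, h3⟩ := hsep z x hz
        exact ⟨W, fun _ => ⟨h1, h2, h3⟩, fun h => absurd h hz⟩
    choose W hW1 hW2 using hW
    have hUc : IsCompact Uᶜ := hU.isClosed_compl.isCompact
    have hWo : ∀ z, IsOpen (W z) := by
      intro z
      by_cases hz : z = x
      · rw [hW2 z hz]; exact isOpen_empty
      · exact h𝒲o _ (hW1 z hz).1
    obtain ⟨t, ht⟩ := hUc.elim_finite_subcover W hWo
      (fun z hz => Set.mem_iUnion.2 ⟨z, (hW1 z (by rintro rfl; exact hz hxU)).2.1⟩)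
    refine ⟨(t.erase x).image W, ?_, ?_, ?_⟩
    · intro A hA
      rw [Finset.coe_image] at hA
      obtain ⟨z, hz, rfl⟩ := hA
      exact (hW1 z (Finset.ne_of_mem_erase hz)).1
    · intro hx
      obtain ⟨A, hA, hxA⟩ := hx
      obtain ⟨z, hz, rfl⟩ := Finset.mem_image.1 (Finset.mem_coe.1 hA)
      exact (hW1 z (Finset.ne_of_mem_erase hz)).2.2 hxA
    · refine Set.compl_subset_comm.1 ?_
      intro w hw
      obtain ⟨z, hz⟩ := Set.mem_iUnion.1 (ht hw)
      obtain ⟨hzt, hwz⟩ := by simpa using hz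
      have hzx : z ≠ x := by rintro rfl; rw [hW2 z rfl] at hwz; exact hwz
      exact ⟨W z, by
        rw [Finset.coe_image]
        exact ⟨z, Finset.mem_coe.2 (Finset.mem_erase.2 ⟨hzx, hzt⟩), rfl⟩, hwz⟩
  -- pairs of disjoint closed network sets, separated by normality
  let P : Set (Finset (Set β) × Finset (Set β)) :=
    {q | ↑q.1 ⊆ 𝒲 ∧ ↑q.2 ⊆ 𝒲 ∧
      Disjoint (⋃₀ (q.1 : Set (Set β)))ᶜ (⋃₀ (q.2 : Set (Set β)))ᶜ}
  have hPsep : ∀ q : P, ∃ U V : Set β, IsOpen U ∧ IsOpen V ∧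
      (⋃₀ ((q : Finset (Set β) × Finset (Set β)).1 : Set (Set β)))ᶜ ⊆ U ∧
      (⋃₀ ((q : Finset (Set β) × Finset (Set β)).2 : Set (Set β)))ᶜ ⊆ V ∧ Disjoint U V := by
    intro q
    exact NormalSpace.normal _ _
      (isOpen_sUnion fun s hs => h𝒲o s (q.2.1 hs)).isClosed_compl
      (isOpen_sUnion fun s hs => h𝒲o s (q.2.2.1 hs)).isClosed_compl
      q.2.2.2
  choose u v hou hov hcu hcv huv using hPsep
  let S : Set (Set β) := Set.range u ∪ Set.range v
  have hScard : #S ≤ κ := by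
    have hQ : #{F : Finset (Set β) | ↑F ⊆ 𝒲} ≤ κ := mk_finsets_le 𝒲 κ hκ h𝒲
    have hP : #P ≤ κ := by
      have hinj : Function.Injective (fun q : P =>
          ((⟨q.1.1, q.2.1⟩ : {F : Finset (Set β) | ↑F ⊆ 𝒲}),
           (⟨q.1.2, q.2.2.1⟩ : {F : Finset (Set β) | ↑F ⊆ 𝒲}))) := by
        rintro ⟨⟨a, b⟩, _⟩ ⟨⟨c, d⟩, _⟩ h
        simp only [Prod.mk.injEq, Subtype.mk.injEq] at h
        simp [Prod.ext_iff, h.1, h.2]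
      refine le_trans (Cardinal.mk_le_of_injective hinj) ?_
      simp only [Cardinal.mk_prod, Cardinal.lift_id]
      calc _ ≤ κ * κ := mul_le_mul' hQ hQ
        _ = κ := Cardinal.mul_eq_self hκ
    refine le_trans (Cardinal.mk_union_le _ _) ?_
    calc #(Set.range u) + #(Set.range v) ≤ κ + κ :=
          add_le_add (Cardinal.mk_range_le.trans hP) (Cardinal.mk_range_le.trans hP)
      _ = κ := Cardinal.add_eq_self hκ
  -- the generated topology is Hausdorff and hence equals the original
  have hSopen : ∀ s ∈ S, IsOpen s := by
    rintro s (⟨q, rfl⟩ | ⟨q, rfl⟩)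
    exacts [hou q, hov q]
  have hle : ‹TopologicalSpace β› ≤ generateFrom S := le_generateFrom hSopen
  have ht2 : @T2Space β (generateFrom S) := by
    refine (@t2Space_iff β (generateFrom S)).2 ?_
    intro a b hab
    obtain ⟨O₁, O₂, hO₁, hO₂, haO, hbO, hdisj⟩ := t2_separation hab
    obtain ⟨F, hF𝒲, haF, hFU⟩ := hnet a O₁ hO₁ haO
    obtain ⟨G, hG𝒲, hbG, hGU⟩ := hnet b O₂ hO₂ hbO
    have hq : (F, G) ∈ P := ⟨hF𝒲, hG𝒲, hdisj.mono hFU hGU⟩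
    refine ⟨u ⟨(F, G), hq⟩, v ⟨(F, G), hq⟩,
      TopologicalSpace.isOpen_generateFrom_of_mem (Or.inl ⟨_, rfl⟩),
      TopologicalSpace.isOpen_generateFrom_of_mem (Or.inr ⟨_, rfl⟩),
      hcu _ haF, hcv _ hbG, huv _⟩
  have heq : ‹TopologicalSpace β› = generateFrom S := by
    refine le_antisymm hle ?_
    intro U hU
    have h1 : IsCompact Uᶜ := (isClosed_compl_iff.2 hU).isCompact
    have h2 : @IsCompact β (generateFrom S) Uᶜ := by
      have himg := @IsCompact.image β β _ (generateFrom S) Uᶜ id h1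
        (continuous_id_iff_le.2 hle)
      rwa [Set.image_id] at himg
    have h3 : @IsClosed β (generateFrom S) Uᶜ := @IsCompact.isClosed β (generateFrom S) ht2 _ h2
    exact (@isClosed_compl_iff β (generateFrom S) U).1 h3
  refine ⟨(fun f => ⋂₀ f) '' {f | f.Finite ∧ f ⊆ S}, isTopologicalBasis_of_subbasis heq, ?_⟩
  exact le_trans Cardinal.mk_image_le (mk_finite_subsets_le S κ hκ hScard)

open Set Cardinal TopologicalSpace

/-- If `psw_e(Z, X) ≤ κ` with `X` regular, then every compact subset `K` of `Z`
has weight at most `κ`, i.e. the subspace `K` admits a topological basis of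
cardinality at most `κ`. -/
theorem weight_compact_le_of_pswe {X : Type*} [TopologicalSpace X] [T3Space X]
    (Z : Set X) (κ : Cardinal) (hκ : ℵ₀ ≤ κ)
    (𝒱 : Set (Set X)) (h𝒱open : ∀ V ∈ 𝒱, IsOpen V)
    (hord : ∀ z ∈ Z, #{V : Set X // V ∈ 𝒱 ∧ z ∈ V} ≤ κ)
    (hsep : ∀ z ∈ Z, ⋂₀ {V ∈ 𝒱 | z ∈ V} = {z}) :
    ∀ K ⊆ Z, IsCompact K →
      ∃ B : Set (Set K), IsTopologicalBasis B ∧ #B ≤ κ := by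
  intro K hKZ hK
  haveI : CompactSpace K := isCompact_iff_compactSpace.1 hK
  rcases subsingleton_or_nontrivial K with hsing | hnontriv
  · -- degenerate case: `K` subsingleton
    refine ⟨{U : Set K | IsOpen U}, isTopologicalBasis_opens, ?_⟩
    haveI : Finite K := Finite.of_subsingleton
    exact le_trans (Cardinal.lt_aleph0_of_finite _).le hκ
  · -- main case
    haveI : Nonempty K := Nontrivial.to_nonempty
    -- the trace of `𝒱` on `K`
    set 𝒜 : Set (Set K) := {A | ∃ V ∈ 𝒱, A = Subtype.val ⁻¹' V} with h𝒜
    have h𝒜o : ∀ A ∈ 𝒜, IsOpen A := by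
      rintro A ⟨V, hV, rfl⟩
      exact (h𝒱open V hV).preimage continuous_subtype_val
    have h𝒜ord : ∀ x : K, #{A : Set K // A ∈ 𝒜 ∧ x ∈ A} ≤ κ := by
      intro x
      have hsurj : Function.Surjective (fun V : {V : Set X // V ∈ 𝒱 ∧ (x : X) ∈ V} =>
          (⟨Subtype.val ⁻¹' V.1, ⟨V.1, V.2.1, rfl⟩, V.2.2⟩ :
            {A : Set K // A ∈ 𝒜 ∧ x ∈ A})) := by
        rintro ⟨A, ⟨V, hV, rfl⟩, hx⟩
        exact ⟨⟨V, hV, hx⟩, rfl⟩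
      exact le_trans (Cardinal.mk_le_of_surjective hsurj) (hord x (hKZ x.2))
    have h𝒜sep : ∀ x y : K, x ≠ y → ∃ A ∈ 𝒜, x ∈ A ∧ y ∉ A := by
      intro x y hxy
      have hxy' : (x : X) ≠ (y : X) := fun h => hxy (Subtype.coe_injective h)
      have hy : (y : X) ∉ ⋂₀ {V ∈ 𝒱 | (x : X) ∈ V} := by
        rw [hsep x (hKZ x.2)]
        exact fun h => hxy' (h.symm)
      rw [Set.mem_sInter] at hy
      push_neg at hy
      obtain ⟨V, ⟨hV, hxV⟩, hyV⟩ := hy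
      exact ⟨Subtype.val ⁻¹' V, ⟨V, hV, rfl⟩, hxV, hyV⟩
    obtain ⟨𝒲, h𝒲𝒜, h𝒲card, h𝒲sep⟩ :=
      exists_small_separating 𝒜 κ hκ h𝒜o h𝒜ord h𝒜sep
    exact basis_of_small_separating 𝒲 κ hκ (fun W hW => h𝒜o W (h𝒲𝒜 hW)) h𝒲card h𝒲sep
end

section
/- For a compact Hausdorff space K, if K admits a separating open cover 𝒱 such that every point lies in at most κ members of 𝒱 (κ infinite), then w(K) ≤ κ; in particular w(K) = psw(K). -/
open Set Cardinal TopologicalSpace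

namespace PSWAux

attribute [local instance] Classical.propDecidable

universe u

/-! ### Counting finite subsets -/

lemma finset_toList_injective (α : Type u) : Function.Injective (Finset.toList (α := α)) := by
  intro s t h
  ext a
  rw [← Finset.mem_toList, h, Finset.mem_toList]

lemma mk_finite_subsets_le {α : Type u} {S : Set α} {κ : Cardinal.{u}} (hκ : ℵ₀ ≤ κ)
    (hS : #S ≤ κ) : #{F : Set α // F ⊆ S ∧ F.Finite} ≤ κ := by
  have h1 : #{F : Set α // F ⊆ S ∧ F.Finite} ≤ #(Finset S) := by
    refine Cardinal.mk_le_of_injective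
      (f := fun F => ((F.2.2.preimage (Subtype.val_injective.injOn)).toFinset : Finset S)) ?_
    intro F G h
    have h2 : (Subtype.val ⁻¹' F.1 : Set S) = Subtype.val ⁻¹' G.1 :=
      Set.Finite.toFinset_inj.mp h
    have h3 : Subtype.val '' (Subtype.val ⁻¹' F.1 : Set S) =
        Subtype.val '' (Subtype.val ⁻¹' G.1 : Set S) := by rw [h2]
    rw [Set.image_preimage_eq_of_subset (by rw [Subtype.range_coe]; exact F.2.1),
      Set.image_preimage_eq_of_subset (by rw [Subtype.range_coe]; exact G.2.1)] at h3
    exact Subtype.ext h3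
  have h2 : #(Finset S) ≤ #(List S) :=
    Cardinal.mk_le_of_injective (finset_toList_injective _)
  refine h1.trans (h2.trans ?_)
  refine (Cardinal.mk_list_le_max _).trans ?_
  exact max_le hκ hS

variable {K : Type u} [TopologicalSpace K] [CompactSpace K] [T2Space K]

/-! ### Minimal finite subcovers -/

def MinCov (𝒱 : Set (Set K)) (𝒞 : Set (Set K)) : Prop :=
  𝒞 ⊆ 𝒱 ∧ 𝒞.Finite ∧ ⋃₀ 𝒞 = Set.univ ∧ ∀ C ∈ 𝒞, ⋃₀ (𝒞 \ {C}) ≠ Set.univ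

lemma exists_minCov_aux (𝒱 : Set (Set K)) (n : ℕ) :
    ∀ (𝒞 : Set (Set K)) (hf : 𝒞.Finite), hf.toFinset.card ≤ n → 𝒞 ⊆ 𝒱 → ⋃₀ 𝒞 = Set.univ →
      ∃ 𝒟, 𝒟 ⊆ 𝒞 ∧ MinCov 𝒱 𝒟 := by
  induction n with
  | zero =>
    intro 𝒞 hf hcard hsub hcov
    exact ⟨𝒞, Subset.rfl, hsub, hf, hcov, by
      intro C hC
      exact absurd (hf.toFinset_nonempty.mpr ⟨C, hC⟩).card_pos.ne' (by omega)⟩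
  | succ n ih =>
    intro 𝒞 hf hcard hsub hcov
    by_cases h : ∀ C ∈ 𝒞, ⋃₀ (𝒞 \ {C}) ≠ Set.univ
    · exact ⟨𝒞, Subset.rfl, hsub, hf, hcov, h⟩
    · push_neg at h
      obtain ⟨C, hC, hC2⟩ := h
      have hf' : (𝒞 \ {C}).Finite := hf.subset diff_subset
      have hlt : hf'.toFinset.card < hf.toFinset.card :=
        Finset.card_lt_card (Set.Finite.toFinset_ssubset_toFinset.mpr
          (Set.sdiff_singleton_ssubset.mpr hC))
      obtain ⟨𝒟, h1, h2⟩ := ih (𝒞 \ {C}) hf' (by omega) (diff_subset.trans hsub) hC2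
      exact ⟨𝒟, h1.trans diff_subset, h2⟩

lemma exists_minCov (𝒱 : Set (Set K)) {𝒞 : Set (Set K)} (hf : 𝒞.Finite)
    (hsub : 𝒞 ⊆ 𝒱) (hcov : ⋃₀ 𝒞 = Set.univ) : ∃ 𝒟, 𝒟 ⊆ 𝒞 ∧ MinCov 𝒱 𝒟 :=
  exists_minCov_aux 𝒱 hf.toFinset.card 𝒞 hf le_rfl hsub hcov

/-! ### The canonical greedy decomposition of a minimal cover -/

section Layers

variable [Nonempty K]

noncomputable def pick (S : Set K) : K :=
  if h : S.Nonempty then h.some else Classical.arbitrary K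

lemma pick_mem {S : Set K} (h : S.Nonempty) : pick S ∈ S := by
  rw [pick, dif_pos h]; exact h.some_mem

noncomputable def layer (𝒞 : Set (Set K)) : ℕ → Set (Set K)
  | 0 => ∅
  | n + 1 =>
    if ⋃₀ layer 𝒞 n = Set.univ then layer 𝒞 n
    else layer 𝒞 n ∪ {C | C ∈ 𝒞 ∧ pick (⋃₀ layer 𝒞 n)ᶜ ∈ C}

lemma layer_subset (𝒞 : Set (Set K)) : ∀ n, layer 𝒞 n ⊆ 𝒞 := by
  intro n
  induction n with
  | zero => exact empty_subset _
  | succ n ih =>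
    rw [layer]
    split
    · exact ih
    · exact union_subset ih (fun C hC => hC.1)

lemma layer_mono_succ (𝒞 : Set (Set K)) (n : ℕ) : layer 𝒞 n ⊆ layer 𝒞 (n + 1) := by
  rw [layer]
  split
  · exact Subset.rfl
  · exact subset_union_left

lemma layer_ssubset (𝒞 : Set (Set K)) (hcov : ⋃₀ 𝒞 = Set.univ) (n : ℕ)
    (h : ⋃₀ layer 𝒞 n ≠ Set.univ) : layer 𝒞 n ⊂ layer 𝒞 (n + 1) := by
  have hne : ((⋃₀ layer 𝒞 n)ᶜ).Nonempty := by
    rw [nonempty_compl]; exact h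
  set x := pick (⋃₀ layer 𝒞 n)ᶜ with hx
  have hxmem : x ∈ (⋃₀ layer 𝒞 n)ᶜ := pick_mem hne
  obtain ⟨C, hC, hxC⟩ : ∃ C ∈ 𝒞, x ∈ C := by
    have : x ∈ ⋃₀ 𝒞 := by rw [hcov]; trivial
    exact this
  have hCnot : C ∉ layer 𝒞 n := fun hmem => hxmem ⟨C, hmem, hxC⟩
  constructor
  · exact layer_mono_succ 𝒞 n
  · intro hsub
    apply hCnot
    apply hsub
    rw [layer, if_neg h]
    exact Or.inr ⟨hC, hxC⟩

lemma layer_stable (𝒞 : Set (Set K)) {m : ℕ} (h : ⋃₀ layer 𝒞 m = Set.univ) :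
    ∀ k, layer 𝒞 (m + k) = layer 𝒞 m := by
  intro k
  induction k with
  | zero => rfl
  | succ k ih =>
    have : m + (k + 1) = (m + k) + 1 := rfl
    rw [this, layer, ih, if_pos h]

lemma exists_layer_univ (𝒞 : Set (Set K)) (hf : 𝒞.Finite) (hcov : ⋃₀ 𝒞 = Set.univ) :
    ∃ m, ⋃₀ layer 𝒞 m = Set.univ := by
  by_contra hcon
  push_neg at hcon
  have key : ∀ n, n ≤ (layer 𝒞 n).ncard := by
    intro n
    induction n with
    | zero => exact Nat.zero_le _
    | succ n ih =>
      have hlt : (layer 𝒞 n).ncard < (layer 𝒞 (n + 1)).ncard :=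
        Set.ncard_lt_ncard (layer_ssubset 𝒞 hcov n (hcon n))
          (hf.subset (layer_subset 𝒞 (n + 1)))
      omega
  have hbound : ∀ n, (layer 𝒞 n).ncard ≤ 𝒞.ncard := fun n =>
    Set.ncard_le_ncard (layer_subset 𝒞 n) hf
  have := key (𝒞.ncard + 1)
  have := hbound (𝒞.ncard + 1)
  omega

lemma minCov_eq_layer {𝒱 𝒞 : Set (Set K)} (h : MinCov 𝒱 𝒞) :
    ∃ m, 𝒞 = layer 𝒞 m := by
  obtain ⟨hsub, hf, hcov, hmin⟩ := h
  obtain ⟨m, hm⟩ := exists_layer_univ 𝒞 hf hcov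
  refine ⟨m, ?_⟩
  by_contra hne
  have hssub : layer 𝒞 m ⊆ 𝒞 := layer_subset 𝒞 m
  obtain ⟨C, hC𝒞, hCm⟩ : ∃ C, C ∈ 𝒞 ∧ C ∉ layer 𝒞 m := by
    by_contra hc
    push_neg at hc
    exact hne (Subset.antisymm hc hssub)
  apply hmin C hC𝒞
  apply Subset.antisymm (subset_univ _)
  rw [← hm]
  apply sUnion_subset_sUnion
  intro D hD
  exact ⟨hssub hD, fun hDC => hCm (hDC ▸ hD)⟩

/-! ### Miščenko's lemma: there are at most `κ` minimal covers -/

def PSet (𝒱 : Set (Set K)) (n : ℕ) : Set (Set (Set K)) :=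
  {A | ∃ 𝒞, MinCov 𝒱 𝒞 ∧ A = layer 𝒞 n}

lemma mk_PSet_le {𝒱 : Set (Set K)} {κ : Cardinal.{u}} (hκ : ℵ₀ ≤ κ)
    (hord : ∀ x : K, #{V : Set K // V ∈ 𝒱 ∧ x ∈ V} ≤ κ) (n : ℕ) :
    #(PSet 𝒱 n) ≤ κ := by
  induction n with
  | zero =>
    have hsub : PSet 𝒱 0 ⊆ {∅} := by
      rintro A ⟨𝒞, _, rfl⟩
      rfl
    exact (Cardinal.mk_le_mk_of_subset hsub).trans (by
      rw [Cardinal.mk_singleton]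
      exact le_trans Cardinal.one_le_aleph0 hκ)
  | succ n ih =>
    have hsub : PSet 𝒱 (n + 1) ⊆
        ⋃ (A : PSet 𝒱 n), (fun Δ => A.1 ∪ Δ) ''
          {Δ : Set (Set K) | Δ ⊆ {V | V ∈ 𝒱 ∧ pick (⋃₀ A.1)ᶜ ∈ V} ∧ Δ.Finite} := by
      rintro B ⟨𝒞, h𝒞, rfl⟩
      have hA : layer 𝒞 n ∈ PSet 𝒱 n := ⟨𝒞, h𝒞, rfl⟩
      refine mem_iUnion.mpr ⟨⟨layer 𝒞 n, hA⟩, ?_⟩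
      refine ⟨layer 𝒞 (n + 1) \ layer 𝒞 n, ⟨?_, ?_⟩, ?_⟩
      · rintro Δ ⟨hΔ1, hΔ2⟩
        rw [layer] at hΔ1
        by_cases hcase : ⋃₀ layer 𝒞 n = Set.univ
        · rw [if_pos hcase] at hΔ1; exact absurd hΔ1 hΔ2
        · rw [if_neg hcase] at hΔ1
          rcases hΔ1 with h | h
          · exact absurd h hΔ2
          · exact ⟨h𝒞.1 h.1, h.2⟩
      · exact (h𝒞.2.1.subset ((diff_subset).trans (layer_subset 𝒞 (n + 1)))).subset
          Subset.rfl
      · simp only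
        rw [union_diff_cancel (layer_mono_succ 𝒞 n)]
    refine (Cardinal.mk_le_mk_of_subset hsub).trans ?_
    refine (Cardinal.mk_iUnion_le _).trans ?_
    have h1 : #(PSet 𝒱 n) ≤ κ := ih
    have h2 : ∀ A : PSet 𝒱 n,
        #((fun Δ => A.1 ∪ Δ) ''
          {Δ : Set (Set K) | Δ ⊆ {V | V ∈ 𝒱 ∧ pick (⋃₀ A.1)ᶜ ∈ V} ∧ Δ.Finite}) ≤ κ := by
      intro A
      refine Cardinal.mk_image_le.trans ?_
      exact mk_finite_subsets_le hκ (hord (pick (⋃₀ A.1)ᶜ))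
    calc #(PSet 𝒱 n) * ⨆ A : PSet 𝒱 n, _ ≤ κ * κ :=
          mul_le_mul' h1 (ciSup_le' h2)
      _ = κ := Cardinal.mul_eq_self hκ

lemma mk_minCov_le {𝒱 : Set (Set K)} {κ : Cardinal.{u}} (hκ : ℵ₀ ≤ κ)
    (hord : ∀ x : K, #{V : Set K // V ∈ 𝒱 ∧ x ∈ V} ≤ κ) :
    #{𝒞 : Set (Set K) | MinCov 𝒱 𝒞} ≤ κ := by
  have hsub : {𝒞 : Set (Set K) | MinCov 𝒱 𝒞} ⊆ ⋃ n : ℕ, PSet 𝒱 n := by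
    intro 𝒞 h𝒞
    obtain ⟨m, hm⟩ := minCov_eq_layer h𝒞
    exact mem_iUnion.mpr ⟨m, ⟨𝒞, h𝒞, hm⟩⟩
  have hsub2 : {𝒞 : Set (Set K) | MinCov 𝒱 𝒞} ⊆ ⋃ n : ULift.{u} ℕ, PSet 𝒱 n.down := by
    refine hsub.trans ?_
    intro A hA
    obtain ⟨n, hn⟩ := mem_iUnion.mp hA
    exact mem_iUnion.mpr ⟨ULift.up n, hn⟩
  refine (Cardinal.mk_le_mk_of_subset hsub2).trans ?_
  refine (Cardinal.mk_iUnion_le _).trans ?_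
  calc #(ULift.{u} ℕ) * ⨆ n : ULift.{u} ℕ, #(PSet 𝒱 n.down) ≤ κ * κ := by
        refine mul_le_mul' ?_ (ciSup_le' (fun n => mk_PSet_le hκ hord n.down))
        rw [Cardinal.mk_eq_aleph0]; exact hκ
    _ = κ := Cardinal.mul_eq_self hκ

end Layers

/-! ### Separating minimal covers -/

lemma exists_sep_minCov {𝒱 : Set (Set K)} (h𝒱open : ∀ V ∈ 𝒱, IsOpen V)
    (hsep : ∀ x : K, ⋂₀ {V ∈ 𝒱 | x ∈ V} = {x}) {x y : K} (hxy : x ≠ y) :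
    ∃ 𝒞, MinCov 𝒱 𝒞 ∧ ∀ C ∈ 𝒞, x ∈ C → y ∉ C := by
  -- a member of 𝒱 containing x but not y
  obtain ⟨V, hV, hyV⟩ : ∃ V ∈ {V ∈ 𝒱 | x ∈ V}, y ∉ V := by
    by_contra h
    push_neg at h
    have : y ∈ ⋂₀ {V ∈ 𝒱 | x ∈ V} := fun V hV => h V hV
    rw [hsep x] at this
    exact hxy this.symm
  -- members of 𝒱 avoiding x cover the complement of V
  have hcompact : IsCompact (Vᶜ : Set K) :=
    (h𝒱open V hV.1).isClosed_compl.isCompact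
  have hcov : (Vᶜ : Set K) ⊆ ⋃ W : {W : Set K // W ∈ 𝒱 ∧ x ∉ W}, W.1 := by
    intro z hz
    have hzx : z ≠ x := fun h => hz (h ▸ hV.2)
    obtain ⟨W, hW, hxW⟩ : ∃ W ∈ {W ∈ 𝒱 | z ∈ W}, x ∉ W := by
      by_contra h
      push_neg at h
      have : x ∈ ⋂₀ {W ∈ 𝒱 | z ∈ W} := fun W hW => h W hW
      rw [hsep z] at this
      exact hzx this.symm
    exact mem_iUnion.mpr ⟨⟨W, hW.1, hxW⟩, hW.2⟩
  obtain ⟨t, ht⟩ := hcompact.elim_finite_subcover _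
    (fun W : {W : Set K // W ∈ 𝒱 ∧ x ∉ W} => h𝒱open W.1 W.2.1) hcov
  -- the finite cover
  set 𝒞' : Set (Set K) := insert V ((fun W : {W : Set K // W ∈ 𝒱 ∧ x ∉ W} => W.1) '' ↑t)
    with h𝒞'
  have h𝒞'fin : 𝒞'.Finite := (t.finite_toSet.image _).insert V
  have h𝒞'sub : 𝒞' ⊆ 𝒱 := by
    rintro C (rfl | ⟨W, _, rfl⟩)
    · exact hV.1
    · exact W.2.1
  have h𝒞'cov : ⋃₀ 𝒞' = Set.univ := by
    apply eq_univ_of_forall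
    intro z
    by_cases hz : z ∈ V
    · exact ⟨V, mem_insert _ _, hz⟩
    · obtain ⟨W, hWt, hzW⟩ := mem_iUnion₂.mp (ht hz)
      exact ⟨W.1, Or.inr ⟨W, hWt, rfl⟩, hzW⟩
  obtain ⟨𝒟, h𝒟sub, h𝒟⟩ := exists_minCov 𝒱 h𝒞'fin h𝒞'sub h𝒞'cov
  refine ⟨𝒟, h𝒟, ?_⟩
  intro C hC hxC
  rcases h𝒟sub hC with rfl | ⟨W, _, rfl⟩
  · exact hyV
  · exact absurd hxC W.2.2

/-! ### Refining a finite open cover by closures -/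

lemma exists_refinement {𝒱 𝒞 : Set (Set K)} (h𝒱open : ∀ V ∈ 𝒱, IsOpen V)
    (hsub : 𝒞 ⊆ 𝒱) (hcov : ⋃₀ 𝒞 = Set.univ) :
    ∃ 𝒟 : Set (Set K), 𝒟.Finite ∧ (∀ D ∈ 𝒟, IsOpen D) ∧ ⋃₀ 𝒟 = Set.univ ∧
      ∀ D ∈ 𝒟, ∃ C ∈ 𝒞, closure D ⊆ C := by
  have key : ∀ x : K, ∃ D : Set K, IsOpen D ∧ x ∈ D ∧ ∃ C ∈ 𝒞, closure D ⊆ C := by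
    intro x
    obtain ⟨C, hC, hxC⟩ : ∃ C ∈ 𝒞, x ∈ C := by
      have : x ∈ ⋃₀ 𝒞 := by rw [hcov]; trivial
      exact this
    obtain ⟨s, hs_nhds, hs_closed, hsC⟩ :=
      exists_mem_nhds_isClosed_subset ((h𝒱open C (hsub hC)).mem_nhds hxC)
    refine ⟨interior s, isOpen_interior, mem_interior_iff_mem_nhds.mpr hs_nhds, C, hC, ?_⟩
    calc closure (interior s) ⊆ closure s := closure_mono interior_subset
      _ = s := hs_closed.closure_eq
      _ ⊆ C := hsC
  choose D hDopen hDmem hDref using key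
  obtain ⟨t, ht⟩ := isCompact_univ.elim_finite_subcover D hDopen
    (fun x _ => mem_iUnion.mpr ⟨x, hDmem x⟩)
  refine ⟨D '' ↑t, (t.finite_toSet.image _), ?_, ?_, ?_⟩
  · rintro _ ⟨x, _, rfl⟩; exact hDopen x
  · apply eq_univ_of_forall
    intro z
    obtain ⟨x, hxt, hzx⟩ := mem_iUnion₂.mp (ht (mem_univ z))
    exact ⟨D x, ⟨x, hxt, rfl⟩, hzx⟩
  · rintro _ ⟨x, _, rfl⟩; exact hDref x

end PSWAux

open PSWAux

/-- For a compact Hausdorff space `K`: if `K` admits a separating open cover `𝒱`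
such that every point lies in at most `κ` members of `𝒱` (`κ` infinite), then
`w(K) ≤ κ`, i.e. `K` has a topological basis of cardinality at most `κ`. -/
theorem weight_le_psw_of_compact {K : Type*} [TopologicalSpace K]
    [CompactSpace K] [T2Space K] (κ : Cardinal) (hκ : ℵ₀ ≤ κ)
    (𝒱 : Set (Set K)) (h𝒱open : ∀ V ∈ 𝒱, IsOpen V)
    (hcover : ⋃₀ 𝒱 = Set.univ)
    (hord : ∀ x : K, #{V : Set K // V ∈ 𝒱 ∧ x ∈ V} ≤ κ)
    (hsep : ∀ x : K, ⋂₀ {V ∈ 𝒱 | x ∈ V} = {x}) :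
    ∃ B : Set (Set K), IsTopologicalBasis B ∧ #B ≤ κ := by
  rcases isEmpty_or_nonempty K with hK | hK
  · refine ⟨∅, ?_, by simp⟩
    refine isTopologicalBasis_of_isOpen_of_nhds (by simp) ?_
    intro x
    exact (IsEmpty.false x).elim
  -- the set of minimal covers, as a type
  set M : Set (Set (Set K)) := {𝒞 : Set (Set K) | MinCov 𝒱 𝒞} with hM
  have hMne : ∃ 𝒞, MinCov 𝒱 𝒞 := by
    have hcov' : (Set.univ : Set K) ⊆ ⋃ V : 𝒱, (V : Set K) := by
      rw [← sUnion_eq_iUnion, hcover]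
    obtain ⟨t, ht⟩ := isCompact_univ.elim_finite_subcover (fun V : 𝒱 => (V : Set K))
      (fun V => h𝒱open V V.2) hcov'
    have hfin : ((fun V : 𝒱 => (V : Set K)) '' ↑t).Finite := t.finite_toSet.image _
    have hs : ((fun V : 𝒱 => (V : Set K)) '' ↑t) ⊆ 𝒱 := by
      rintro _ ⟨V, _, rfl⟩; exact V.2
    have hc : ⋃₀ ((fun V : 𝒱 => (V : Set K)) '' ↑t) = Set.univ := by
      apply eq_univ_of_forall
      intro z
      obtain ⟨V, hVt, hzV⟩ := mem_iUnion₂.mp (ht (mem_univ z))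
      exact ⟨V, ⟨V, hVt, rfl⟩, hzV⟩
    obtain ⟨𝒟, _, h𝒟⟩ := exists_minCov 𝒱 hfin hs hc
    exact ⟨𝒟, h𝒟⟩
  -- refinements
  have hrefine : ∀ 𝒞 : M, ∃ 𝒟 : Set (Set K), 𝒟.Finite ∧ (∀ D ∈ 𝒟, IsOpen D) ∧
      ⋃₀ 𝒟 = Set.univ ∧ ∀ D ∈ 𝒟, ∃ C ∈ (𝒞 : Set (Set K)), closure D ⊆ C := by
    intro 𝒞
    exact exists_refinement h𝒱open 𝒞.2.1 𝒞.2.2.2.1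
  choose Dfam hDfin hDopen hDcov hDref using hrefine
  -- total refinement family
  set 𝒟tot : Set (Set K) := ⋃ 𝒞 : M, Dfam 𝒞 with h𝒟tot
  have h𝒟tot_open : ∀ D ∈ 𝒟tot, IsOpen D := by
    rintro D hD
    obtain ⟨𝒞, h𝒞⟩ := mem_iUnion.mp hD
    exact hDopen 𝒞 D h𝒞
  have h𝒟tot_card : #𝒟tot ≤ κ := by
    refine (Cardinal.mk_iUnion_le _).trans ?_
    have h1 : #M ≤ κ := mk_minCov_le hκ hord
    have h2 : ∀ 𝒞 : M, #(Dfam 𝒞) ≤ κ :=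
      fun 𝒞 => ((hDfin 𝒞).lt_aleph0.le).trans hκ
    calc #M * ⨆ 𝒞 : M, #(Dfam 𝒞) ≤ κ * κ := mul_le_mul' h1 (ciSup_le' h2)
      _ = κ := Cardinal.mul_eq_self hκ
  -- the basis: finite intersections from 𝒟tot
  refine ⟨sInter '' {F : Set (Set K) | F ⊆ 𝒟tot ∧ F.Finite}, ?_, ?_⟩
  · refine isTopologicalBasis_of_isOpen_of_nhds ?_ ?_
    · rintro _ ⟨F, ⟨hF1, hF2⟩, rfl⟩
      exact hF2.isOpen_sInter (fun D hD => h𝒟tot_open D (hF1 hD))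
    · intro x U hxU hUopen
      -- the closed "stars"
      set t : M → Set K := fun 𝒞 => ⋃ D ∈ {D | D ∈ Dfam 𝒞 ∧ x ∈ closure D}, closure D
        with htdef
      have ht_closed : ∀ 𝒞 : M, IsClosed (t 𝒞) :=
        fun 𝒞 => Set.Finite.isClosed_biUnion ((hDfin 𝒞).subset (fun D hD => hD.1))
          (fun D _ => isClosed_closure)
      have hinter : Set.univ ∩ ⋂ 𝒞 : M, (t 𝒞 ∩ Uᶜ) = ∅ := by
        rw [univ_inter]
        by_contra h
        obtain ⟨y, hy⟩ := nonempty_iff_ne_empty.mpr h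
        simp only [mem_iInter, mem_inter_iff, mem_compl_iff] at hy
        have hyx : x ≠ y := by
          rintro rfl
          obtain ⟨𝒞₀, h𝒞₀⟩ := hMne
          exact (hy ⟨𝒞₀, h𝒞₀⟩).2 hxU
        obtain ⟨𝒞₀, h𝒞₀, hsep𝒞₀⟩ := exists_sep_minCov h𝒱open hsep hyx
        have hy𝒞₀ := hy ⟨𝒞₀, h𝒞₀⟩
        obtain ⟨D, hD, hyD⟩ := mem_iUnion₂.mp hy𝒞₀.1
        obtain ⟨C, hC, hclos⟩ := hDref ⟨𝒞₀, h𝒞₀⟩ D hD.1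
        exact hsep𝒞₀ C hC (hclos hD.2) (hclos hyD)
      obtain ⟨u, hu⟩ := isCompact_univ.elim_finite_subfamily_closed
        (fun 𝒞 : M => t 𝒞 ∩ Uᶜ) (fun 𝒞 => (ht_closed 𝒞).inter hUopen.isClosed_compl)
        hinter
      -- pick a member of each refinement containing x
      have hpick : ∀ 𝒞 : M, ∃ D, D ∈ Dfam 𝒞 ∧ x ∈ D := by
        intro 𝒞
        have : x ∈ ⋃₀ Dfam 𝒞 := by rw [hDcov 𝒞]; trivial
        obtain ⟨D, hD, hxD⟩ := this
        exact ⟨D, hD, hxD⟩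
      choose Dx hDx hxDx using hpick
      refine ⟨⋂₀ (Dx '' ↑u), ⟨Dx '' ↑u, ⟨?_, u.finite_toSet.image _⟩, rfl⟩, ?_, ?_⟩
      · rintro _ ⟨𝒞, _, rfl⟩
        exact mem_iUnion.mpr ⟨𝒞, hDx 𝒞⟩
      · refine mem_sInter.mpr ?_
        rintro D ⟨𝒞, _, rfl⟩
        exact hxDx 𝒞
      · intro z hz
        by_contra hzU
        have hz' : z ∈ Set.univ ∩ ⋂ 𝒞 ∈ u, (t 𝒞 ∩ Uᶜ) := by
          refine ⟨trivial, ?_⟩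
          simp only [mem_iInter]
          intro 𝒞 h𝒞u
          refine ⟨?_, hzU⟩
          have hzD : z ∈ Dx 𝒞 :=
            mem_sInter.mp hz _ (mem_image_of_mem Dx (Finset.mem_coe.mpr h𝒞u))
          exact mem_iUnion₂.mpr ⟨Dx 𝒞, ⟨hDx 𝒞, subset_closure (hxDx 𝒞)⟩,
            subset_closure hzD⟩
        rw [hu] at hz'
        exact hz'
  · refine Cardinal.mk_image_le.trans ?_
    exact mk_finite_subsets_le hκ h𝒟tot_card
end

section
/- Let X and Y be regular topological spaces, let α be a hereditarily closed compact network on X closed under finite unions, and let C_α(X,Y) denote the continuous functions X → Y with the α-open topology. Then for every f ∈ C_α(X,Y): ψ(f, C_α(X,Y)) ≤ wαc(X) · sup_{A∈α} ψ(f(A), Y) · sup_{A∈α} w(f(A)). -/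
open Set Cardinal TopologicalSpace

/-- **Theorem 2.1.** For regular `X`, `Y`, a hereditarily closed compact network `α` on `X`
closed under finite unions, and the set-open topology on `C(X,Y)` generated by the sets
`[A,V] = {f : f(A) ⊆ V}` (`A ∈ α`, `V` open): for every continuous `f : X → Y`,
`ψ(f, C_α(X,Y)) ≤ wαc(X) · sup_{A∈α} ψ(f(A),Y) · sup_{A∈α} w(f(A))`, stated via
arbitrary upper bounds `κ₁, κ₂, κ₃` for the three invariants. -/

theorem psi_Calpha_le_wac_mul_psi_mul_weight
    {X Y : Type u} [TopologicalSpace X] [TopologicalSpace Y] [T3Space X] [T3Space Y]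
    (α : Set (Set X))
    (hnet : ∀ x : X, ∀ U : Set X, IsOpen U → x ∈ U → ∃ A ∈ α, x ∈ A ∧ A ⊆ U)
    (hcpt : ∀ A ∈ α, IsCompact A)
    (hher : ∀ A ∈ α, ∀ B ⊆ A, IsClosed B → B ∈ α)
    (hun : ∀ A ∈ α, ∀ B ∈ α, A ∪ B ∈ α)
    (κ₁ κ₂ κ₃ : Cardinal) (hκ₁ : ℵ₀ ≤ κ₁) (hκ₂ : ℵ₀ ≤ κ₂) (hκ₃ : ℵ₀ ≤ κ₃)
    -- wαc(X) ≤ κ₁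
    (hwac : ∃ β ⊆ α, #β ≤ κ₁ ∧ Dense (⋃₀ β))
    (f : C(X, Y))
    -- sup_{A ∈ α} ψ(f(A), Y) ≤ κ₂
    (hψ : ∀ A ∈ α, ∃ 𝒱 : Set (Set Y),
      (∀ V ∈ 𝒱, IsOpen V) ∧ #𝒱 ≤ κ₂ ∧ ⋂₀ 𝒱 = f '' A)
    -- sup_{A ∈ α} w(f(A)) ≤ κ₃
    (hw : ∀ A ∈ α, ∃ B : Set (Set (f '' A)), IsTopologicalBasis B ∧ #B ≤ κ₃) :
    -- conclusion: ψ(f, C_α(X,Y)) ≤ κ₁ · κ₂ · κ₃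
    letI T : TopologicalSpace C(X, Y) := TopologicalSpace.generateFrom
      {S : Set C(X, Y) | ∃ A ∈ α, ∃ V : Set Y, IsOpen V ∧ S = {g : C(X, Y) | g '' A ⊆ V}}
    ∃ 𝒲 : Set (Set C(X, Y)), (∀ W ∈ 𝒲, T.IsOpen W) ∧ #𝒲 ≤ κ₁ * κ₂ * κ₃ ∧
      ⋂₀ 𝒲 = {f} := by
  classical
  obtain ⟨β, hβα, hβc, hβd⟩ := hwac
  choose 𝒱 h𝒱open h𝒱card h𝒱eq using hψ
  choose Bas hBasb hBasc using hw
  -- the auxiliary closed subsets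
  let Cst : ∀ A : Set X, Set ↥(f '' A) → Set X :=
    fun A O => A ∩ (⇑f) ⁻¹' closure (Subtype.val '' O)
  have hCmem : ∀ (A : Set X), A ∈ α → ∀ O : Set ↥(f '' A), Cst A O ∈ α := by
    intro A hA O
    exact hher A hA _ inter_subset_left
      (((hcpt A hA).isClosed).inter (isClosed_closure.preimage f.continuous))
  -- index type
  let ι : Type u := Σ A : β, Σ O : Bas A.1 (hβα A.2),
    𝒱 (Cst A.1 O.1) (hCmem A.1 (hβα A.2) O.1)
  let F : ι → Set C(X, Y) := fun i => {g : C(X, Y) | g '' Cst i.1.1 i.2.1.1 ⊆ i.2.2.1}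
  refine ⟨Set.range F, ?_, ?_, ?_⟩
  · rintro W ⟨i, rfl⟩
    exact TopologicalSpace.GenerateOpen.basic _
      ⟨Cst i.1.1 i.2.1.1, hCmem _ (hβα i.1.2) _, i.2.2.1,
        h𝒱open _ (hCmem _ (hβα i.1.2) _) _ i.2.2.2, rfl⟩
  · refine le_trans mk_range_le ?_
    have h2 : ∀ A : β, #(Σ O : Bas A.1 (hβα A.2),
        𝒱 (Cst A.1 O.1) (hCmem A.1 (hβα A.2) O.1)) ≤ κ₃ * κ₂ := by
      intro A
      rw [Cardinal.mk_sigma]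
      calc (Cardinal.sum fun O : Bas A.1 (hβα A.2) =>
              #(𝒱 (Cst A.1 O.1) (hCmem A.1 (hβα A.2) O.1)))
          ≤ Cardinal.sum fun _ : Bas A.1 (hβα A.2) => κ₂ :=
            Cardinal.sum_le_sum _ _ (fun O => h𝒱card _ _)
        _ = #(Bas A.1 (hβα A.2)) * κ₂ := Cardinal.sum_const' _ _
        _ ≤ κ₃ * κ₂ := mul_le_mul_left (hBasc _ _) _
    calc #ι = Cardinal.sum fun A : β => #(Σ O : Bas A.1 (hβα A.2),
            𝒱 (Cst A.1 O.1) (hCmem A.1 (hβα A.2) O.1)) := Cardinal.mk_sigma _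
      _ ≤ Cardinal.sum fun _ : β => κ₃ * κ₂ := Cardinal.sum_le_sum _ _ h2
      _ = #β * (κ₃ * κ₂) := Cardinal.sum_const' _ _
      _ ≤ κ₁ * (κ₃ * κ₂) := mul_le_mul_left hβc _
      _ = κ₁ * κ₂ * κ₃ := by ring
  · rw [Set.sInter_range]
    refine Set.eq_of_subset_of_subset ?_ ?_
    · intro g hg
      simp only [Set.mem_iInter] at hg
      have key : ∀ A ∈ β, ∀ x ∈ A, g x = f x := by
        intro A hAβ x hx
        by_contra hne
        have hAα : A ∈ α := hβα hAβ
        obtain ⟨U', U, hU'o, hUo, hgU', hfU, hdisj⟩ := t2_separation hne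
        obtain ⟨s, hs_nhds, hs_closed, hsU⟩ :=
          exists_mem_nhds_isClosed_subset (hUo.mem_nhds hfU)
        have hfU₂ : f x ∈ interior s := mem_interior_iff_mem_nhds.mpr hs_nhds
        have hclU₂ : closure (interior s) ⊆ U :=
          (closure_mono interior_subset).trans (by rwa [hs_closed.closure_eq])
        obtain ⟨O, hO, hyO, hOsub⟩ := (hBasb A hAα).exists_subset_of_mem_open
          (show (⟨f x, mem_image_of_mem f hx⟩ : ↥(f '' A)) ∈
              (Subtype.val ⁻¹' interior s) from hfU₂)
          (isOpen_interior.preimage continuous_subtype_val)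
        have hxC : x ∈ Cst A O :=
          ⟨hx, subset_closure (mem_image_of_mem Subtype.val hyO)⟩
        have hgC : g '' Cst A O ⊆ f '' Cst A O := by
          rw [← h𝒱eq (Cst A O) (hCmem A hAα O)]
          exact subset_sInter fun V hV => hg ⟨⟨A, hAβ⟩, ⟨O, hO⟩, ⟨V, hV⟩⟩
        have hfC : f '' Cst A O ⊆ closure (Subtype.val '' O) :=
          image_subset_iff.mpr fun z hz => hz.2
        have h1 : closure (Subtype.val '' O) ⊆ U := by
          refine (closure_mono ?_).trans hclU₂
          rintro _ ⟨z, hz, rfl⟩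
          exact hOsub hz
        have hgxU : g x ∈ U := h1 (hfC (hgC (mem_image_of_mem g hxC)))
        exact Set.disjoint_left.mp hdisj hgU' hgxU
      have hE : IsClosed {x : X | g x = f x} := isClosed_eq g.continuous f.continuous
      have hsub : (Set.univ : Set X) ⊆ {x : X | g x = f x} := by
        rw [← hβd.closure_eq]
        refine closure_minimal ?_ hE
        rintro x ⟨A, hA, hx⟩
        exact key A hA x hx
      exact ContinuousMap.ext fun x => hsub (mem_univ x)
    · intro g hg
      rw [Set.mem_singleton_iff] at hg
      subst hg
      simp only [Set.mem_iInter]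
      intro i
      show g '' Cst i.1.1 i.2.1.1 ⊆ i.2.2.1
      rw [← h𝒱eq (Cst i.1.1 i.2.1.1) (hCmem _ (hβα i.1.2) _)]
      exact sInter_subset_of_mem i.2.2.2
end

section
/- Let X and Y be regular topological spaces, α a hereditarily closed compact network on X closed under finite unions. Then for every f ∈ C_α(X,Y): ψ(f, C_α(X,Y)) ≤ wαc(X) · psw_e(f(X), Y). -/
/-!
For `A` in a dense family `β ⊆ α`, an irreducible finite cover `F` of `f(A)` by members of `𝒱`
and `V ∈ F`, the set `A \ f⁻¹(⋃ (F \ {V}))` is closed in the compact set `A`, hence lies in `α`,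
and `f` maps it into `V`; these subbasic neighbourhoods of `f` form the required family.
If `g ≠ f`, then `g z ≠ f z` for some `z` in some `A ∈ β`. Take `V ∈ 𝒱` with `f z ∈ V`, `g z ∉ V`,
cover the compact set `f(A) \ V` by finitely many members of `𝒱` missing `f z`, and prune this
cover of `f(A)` to an irreducible one: it still contains `V`, no other member contains `f z`, so
`z` lies in the corresponding set and `g` is excluded.
The count rests on Mishchenko's lemma: if every point of `T` lies in at most `κ ≥ ℵ₀` members
of `𝒱`, each `S ⊆ T` has at most `κ` irreducible finite covers by `𝒱`. Indeed, an irreducible cover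
of `S` with `n + 1` members is `insert V F'`, where `V` is one of the at most `κ` members
containing a fixed point of `S` and `F'` is an irreducible cover of `S \ V` with `n` members.
-/

open Set Cardinal TopologicalSpace

theorem mk_biUnion_le_of_forall_le {ι α : Type u} {κ : Cardinal.{u}} (hκ : ℵ₀ ≤ κ) {s : Set ι}
    (hs : #s ≤ κ) {A : ι → Set α} (hA : ∀ i ∈ s, #(A i) ≤ κ) : #(⋃ i ∈ s, A i) ≤ κ :=
  (mk_biUnion_le A s).trans <| (mul_le_mul' hs (ciSup_le' fun i : s => hA i.1 i.2)).trans_eq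
    (mul_eq_self hκ)

theorem mk_iUnion_nat_le_of_forall_le {α : Type u} {κ : Cardinal.{u}} (hκ : ℵ₀ ≤ κ)
    {A : ℕ → Set α} (hA : ∀ n, #(A n) ≤ κ) : #(⋃ n, A n) ≤ κ := by
  have := (mk_iUnion_le_lift A).trans (mul_le_mul' le_rfl (ciSup_le' fun n => lift_le.2 (hA n)))
  simpa [aleph0_mul_eq hκ] using this

theorem exists_mem_notMem_of_sInter_eq_singleton {Z : Type*} {𝒱 : Set (Set Z)} {k y : Z}
    (hk : ⋂₀ {W ∈ 𝒱 | k ∈ W} = {k}) (hne : y ≠ k) : ∃ W ∈ 𝒱, k ∈ W ∧ y ∉ W := by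
  by_contra! h
  have hy : y ∈ ⋂₀ {W ∈ 𝒱 | k ∈ W} := fun W hW => h W hW.1 hW.2
  rw [hk] at hy
  exact hne hy

section IrreducibleCovers

open scoped Classical

variable {Z : Type*} {𝒱 : Set (Set Z)} {S : Set Z}

def irreducibleCovers (𝒱 : Set (Set Z)) (S : Set Z) : Set (Finset (Set Z)) :=
  {F | ↑F ⊆ 𝒱 ∧ S ⊆ ⋃₀ ↑F ∧ ∀ V ∈ F, ¬ S ⊆ ⋃₀ ↑(F.erase V)}

theorem exists_mem_irreducibleCovers_subset (F : Finset (Set Z)) (hF𝒱 : ↑F ⊆ 𝒱)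
    (hSF : S ⊆ ⋃₀ ↑F) : ∃ G ∈ irreducibleCovers 𝒱 S, G ⊆ F := by
  induction F using Finset.strongInduction with
  | H F ih =>
    by_cases hirr : ∀ V ∈ F, ¬ S ⊆ ⋃₀ ↑(F.erase V)
    · exact ⟨F, ⟨hF𝒱, hSF, hirr⟩, subset_rfl⟩
    push Not at hirr
    obtain ⟨V, hV, hcov⟩ := hirr
    obtain ⟨G, hG, hGF⟩ := ih _ (Finset.erase_ssubset hV)
      ((Finset.coe_subset.2 (Finset.erase_subset V F)).trans hF𝒱) hcov
    exact ⟨G, hG, hGF.trans (Finset.erase_subset V F)⟩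

theorem erase_mem_irreducibleCovers_diff {F : Finset (Set Z)} (hF : F ∈ irreducibleCovers 𝒱 S)
    {V : Set Z} (hV : V ∈ F) : F.erase V ∈ irreducibleCovers 𝒱 (S \ V) := by
  obtain ⟨hF𝒱, hSF, hirr⟩ := hF
  refine ⟨(Finset.coe_subset.2 (Finset.erase_subset V F)).trans hF𝒱, ?_, fun W hW hcov => ?_⟩
  · rintro s ⟨hsS, hsV⟩
    obtain ⟨W, hWF, hsW⟩ := hSF hsS
    exact ⟨W, Finset.mem_erase.2 ⟨fun h => hsV (h ▸ hsW), hWF⟩, hsW⟩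
  · obtain ⟨hWV, hWF⟩ := Finset.mem_erase.1 hW
    refine hirr W hWF fun s hs => ?_
    by_cases hsV : s ∈ V
    · exact ⟨V, Finset.mem_erase.2 ⟨hWV.symm, hV⟩, hsV⟩
    · have hsub := Finset.erase_subset_erase W (Finset.erase_subset V F)
      exact sUnion_mono (Finset.coe_subset.2 hsub) (hcov ⟨hs, hsV⟩)

theorem mk_irreducibleCovers_card_eq_le {T : Set Z} {κ : Cardinal} (hκ : ℵ₀ ≤ κ)
    (hT : ∀ y ∈ T, #{V ∈ 𝒱 | y ∈ V} ≤ κ) (n : ℕ) (hST : S ⊆ T) :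
    #{F ∈ irreducibleCovers 𝒱 S | F.card = n} ≤ κ := by
  induction n generalizing S with
  | zero =>
    have hsub : {F ∈ irreducibleCovers 𝒱 S | F.card = 0} ⊆ {∅} :=
      fun F hF => Finset.card_eq_zero.1 hF.2
    exact (mk_le_mk_of_subset hsub).trans (by simpa using one_le_aleph0.trans hκ)
  | succ n ih =>
    rcases S.eq_empty_or_nonempty with rfl | ⟨s, hs⟩
    · have hempty : {F ∈ irreducibleCovers 𝒱 ∅ | F.card = n + 1} = ∅ := by
        refine eq_empty_of_forall_notMem ?_
        rintro F ⟨⟨-, -, hirr⟩, hcard⟩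
        obtain ⟨V, hV⟩ := Finset.card_pos.1 (by rw [hcard]; exact n.succ_pos)
        exact hirr V hV (empty_subset _)
      simp [hempty]
    have hsub : {F ∈ irreducibleCovers 𝒱 S | F.card = n + 1} ⊆
        ⋃ V ∈ {V ∈ 𝒱 | s ∈ V}, insert V '' {F ∈ irreducibleCovers 𝒱 (S \ V) | F.card = n} := by
      rintro F ⟨hF, hcard⟩
      obtain ⟨V, hVF, hsV⟩ := hF.2.1 hs
      refine mem_biUnion ⟨hF.1 hVF, hsV⟩ ⟨F.erase V, ⟨erase_mem_irreducibleCovers_diff hF hVF, ?_⟩,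
        Finset.insert_erase hVF⟩
      rw [Finset.card_erase_of_mem hVF, hcard, Nat.add_sub_cancel]
    exact (mk_le_mk_of_subset hsub).trans <| mk_biUnion_le_of_forall_le hκ (hT s (hST hs))
      fun V _ => mk_image_le.trans (ih (sdiff_subset.trans hST))

theorem mk_irreducibleCovers_le {T : Set Z} {κ : Cardinal} (hκ : ℵ₀ ≤ κ)
    (hT : ∀ y ∈ T, #{V ∈ 𝒱 | y ∈ V} ≤ κ) (hST : S ⊆ T) : #(irreducibleCovers 𝒱 S) ≤ κ := by
  have hsub : irreducibleCovers 𝒱 S ⊆ ⋃ n : ℕ, {F ∈ irreducibleCovers 𝒱 S | F.card = n} :=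
    fun F hF => mem_iUnion.2 ⟨F.card, hF, rfl⟩
  exact (mk_le_mk_of_subset hsub).trans <|
    mk_iUnion_nat_le_of_forall_le hκ fun n => mk_irreducibleCovers_card_eq_le hκ hT n hST

theorem exists_mem_irreducibleCovers_notMem_sUnion_erase [TopologicalSpace Z]
    (h𝒱 : ∀ V ∈ 𝒱, IsOpen V) {K : Set Z} (hK : IsCompact K) {y : Z} (hy : y ∈ K) {V : Set Z}
    (hV : V ∈ 𝒱) (hyV : y ∈ V) (hsep : ∀ k ∈ K \ V, ∃ W ∈ 𝒱, k ∈ W ∧ y ∉ W) :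
    ∃ F ∈ irreducibleCovers 𝒱 K, V ∈ F ∧ y ∉ ⋃₀ ↑(F.erase V) := by
  obtain ⟨𝒰, h𝒰, h𝒰fin, hcov⟩ := (hK.diff (h𝒱 V hV)).elim_finite_subcover_image
    (b := {W ∈ 𝒱 | y ∉ W}) (c := id) (fun W hW => h𝒱 W hW.1) fun k hk => by
      obtain ⟨W, hW, hkW, hyW⟩ := hsep k hk
      exact mem_biUnion ⟨hW, hyW⟩ hkW
  have hF₀𝒱 : ↑(insert V h𝒰fin.toFinset) ⊆ 𝒱 := by
    simpa [insert_subset_iff] using ⟨hV, fun W hW => (h𝒰 hW).1⟩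
  have hKF₀ : K ⊆ ⋃₀ ↑(insert V h𝒰fin.toFinset) := fun k hk => by
    by_cases hkV : k ∈ V
    · exact ⟨V, by simp, hkV⟩
    · obtain ⟨W, hW, hkW⟩ := mem_iUnion₂.1 (hcov ⟨hk, hkV⟩)
      exact ⟨W, by simp [hW], hkW⟩
  obtain ⟨F, hF, hFF₀⟩ := exists_mem_irreducibleCovers_subset _ hF₀𝒱 hKF₀
  have hyF : ∀ W ∈ F, y ∈ W → W = V := fun W hW hyW => by
    rcases Finset.mem_insert.1 (hFF₀ hW) with rfl | hW𝒰
    · rfl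
    · exact absurd hyW (h𝒰 (h𝒰fin.mem_toFinset.1 hW𝒰)).2
  obtain ⟨W, hW, hyW⟩ := hF.2.1 hy
  refine ⟨F, hF, hyF W hW hyW ▸ hW, fun ⟨W', hW', hyW'⟩ => ?_⟩
  obtain ⟨hW'V, hW'F⟩ := Finset.mem_erase.1 hW'
  exact hW'V (hyF W' hW'F hyW')

theorem image_diff_preimage_sUnion_erase_subset {X : Type*} {f : X → Z} {A : Set X}
    {F : Finset (Set Z)} (hF : f '' A ⊆ ⋃₀ ↑F) (V : Set Z) :
    f '' (A \ f ⁻¹' ⋃₀ ↑(F.erase V)) ⊆ V := by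
  rintro _ ⟨x, ⟨hxA, hx⟩, rfl⟩
  obtain ⟨W, hWF, hxW⟩ := hF (mem_image_of_mem f hxA)
  by_contra hxV
  exact hx ⟨W, Finset.mem_erase.2 ⟨fun h => hxV (h ▸ hxW), hWF⟩, hxW⟩

end IrreducibleCovers

section Pseudobase

open scoped Classical

variable {X Y : Type u} [TopologicalSpace X] [TopologicalSpace Y] {f : C(X, Y)}
  {β : Set (Set X)} {𝒱 : Set (Set Y)}

def pseudobase (f : C(X, Y)) (β : Set (Set X)) (𝒱 : Set (Set Y)) : Set (Set C(X, Y)) :=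
  ⋃ A ∈ β, ⋃ F ∈ irreducibleCovers 𝒱 (f '' A), ⋃ V ∈ (↑F : Set (Set Y)),
    {{g : C(X, Y) | g '' (A \ f ⁻¹' ⋃₀ ↑(F.erase V)) ⊆ V}}

theorem mem_pseudobase {W : Set C(X, Y)} : W ∈ pseudobase f β 𝒱 ↔
    ∃ A ∈ β, ∃ F ∈ irreducibleCovers 𝒱 (f '' A), ∃ V ∈ F,
      W = {g : C(X, Y) | g '' (A \ f ⁻¹' ⋃₀ ↑(F.erase V)) ⊆ V} := by
  simp [pseudobase]

theorem pseudobase_subset_setOpenSubbasis [T2Space X] {α : Set (Set X)} (hβα : β ⊆ α)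
    (hcpt : ∀ A ∈ α, IsCompact A) (hher : ∀ A ∈ α, ∀ B ⊆ A, IsClosed B → B ∈ α)
    (h𝒱 : ∀ V ∈ 𝒱, IsOpen V) : pseudobase f β 𝒱 ⊆
      {S | ∃ A ∈ α, ∃ V : Set Y, IsOpen V ∧ S = {g : C(X, Y) | g '' A ⊆ V}} := by
  intro W hW
  obtain ⟨A, hA, F, hF, V, hVF, rfl⟩ := mem_pseudobase.1 hW
  have hopen : IsOpen (⋃₀ (↑(F.erase V) : Set (Set Y))) :=
    isOpen_sUnion fun U hU => h𝒱 U (hF.1 (Finset.mem_of_mem_erase hU))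
  have hclosed : IsClosed (A \ f ⁻¹' ⋃₀ ↑(F.erase V)) :=
    (hcpt A (hβα hA)).isClosed.sdiff (hopen.preimage f.continuous)
  exact ⟨_, hher A (hβα hA) _ sdiff_subset hclosed, V, h𝒱 V (hF.1 hVF), rfl⟩

theorem mk_pseudobase_le {κ₁ κ₂ : Cardinal} (hβ : #β ≤ κ₁) (hκ₂ : ℵ₀ ≤ κ₂)
    (h𝒱 : ∀ y ∈ range f, #{V ∈ 𝒱 | y ∈ V} ≤ κ₂) : #(pseudobase f β 𝒱) ≤ κ₁ * κ₂ := by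
  refine (mk_biUnion_le _ β).trans (mul_le_mul' hβ (ciSup_le' fun A => ?_))
  refine mk_biUnion_le_of_forall_le hκ₂ (mk_irreducibleCovers_le hκ₂ h𝒱 (image_subset_range _ _))
    fun F _ => ?_
  exact ((F.finite_toSet.biUnion fun _ _ => finite_singleton _).countable.le_aleph0).trans hκ₂

theorem sInter_pseudobase_eq_singleton [T2Space Y] (hβ : Dense (⋃₀ β))
    (hcpt : ∀ A ∈ β, IsCompact A) (h𝒱 : ∀ V ∈ 𝒱, IsOpen V)
    (hsep : ∀ y ∈ range f, ⋂₀ {V ∈ 𝒱 | y ∈ V} = {y}) : ⋂₀ pseudobase f β 𝒱 = {f} := by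
  refine eq_singleton_iff_unique_mem.2 ⟨fun W hW => ?_, fun g hg => ?_⟩
  · obtain ⟨A, -, F, hF, V, -, rfl⟩ := mem_pseudobase.1 hW
    exact image_diff_preimage_sUnion_erase_subset hF.2.1 V
  by_contra hgf
  obtain ⟨z, hz, A, hA, hzA⟩ : ({x | g x ≠ f x} ∩ ⋃₀ β).Nonempty :=
    hβ.inter_open_nonempty _ (isClosed_eq g.continuous f.continuous).isOpen_compl
      (by simpa [Set.Nonempty, ContinuousMap.ext_iff] using hgf)
  obtain ⟨V, hV, hfzV, hgzV⟩ := exists_mem_notMem_of_sInter_eq_singleton (hsep _ ⟨z, rfl⟩) hz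
  obtain ⟨F, hF, hVF, hfzF⟩ := exists_mem_irreducibleCovers_notMem_sUnion_erase h𝒱
    ((hcpt A hA).image f.continuous) (mem_image_of_mem f hzA) hV hfzV fun k ⟨hkA, hkV⟩ =>
      exists_mem_notMem_of_sInter_eq_singleton (hsep k (image_subset_range _ _ hkA))
        fun h => hkV (h ▸ hfzV)
  exact hgzV (hg _ (mem_pseudobase.2 ⟨A, hA, F, hF, V, hVF, rfl⟩) (mem_image_of_mem g ⟨hzA, hfzF⟩))

end Pseudobase

theorem psi_Calpha_le_wac_mul_pswe_general
    {X Y : Type u} [TopologicalSpace X] [TopologicalSpace Y] [T3Space X] [T3Space Y]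
    (α : Set (Set X))
    (hcpt : ∀ A ∈ α, IsCompact A)
    (hher : ∀ A ∈ α, ∀ B ⊆ A, IsClosed B → B ∈ α)
    (κ₁ κ₂ : Cardinal) (hκ₂ : ℵ₀ ≤ κ₂)
    -- wαc(X) ≤ κ₁
    (hwac : ∃ β ⊆ α, #β ≤ κ₁ ∧ Dense (⋃₀ β))
    (f : C(X, Y))
    -- psw_e(f(X), Y) ≤ κ₂
    (hpswe : ∃ 𝒱 : Set (Set Y), (∀ V ∈ 𝒱, IsOpen V) ∧
      ∀ y ∈ range f, #{V : Set Y // V ∈ 𝒱 ∧ y ∈ V} ≤ κ₂ ∧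
        ⋂₀ {V ∈ 𝒱 | y ∈ V} = {y}) :
    -- conclusion: ψ(f, C_α(X,Y)) ≤ κ₁ · κ₂
    letI T : TopologicalSpace C(X, Y) := TopologicalSpace.generateFrom
      {S : Set C(X, Y) | ∃ A ∈ α, ∃ V : Set Y, IsOpen V ∧ S = {g : C(X, Y) | g '' A ⊆ V}}
    ∃ 𝒲 : Set (Set C(X, Y)), (∀ W ∈ 𝒲, T.IsOpen W) ∧ #𝒲 ≤ κ₁ * κ₂ ∧
      ⋂₀ 𝒲 = {f} := by
  obtain ⟨β, hβα, hβ, hβdense⟩ := hwac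
  obtain ⟨𝒱, h𝒱, hsep⟩ := hpswe
  exact ⟨pseudobase f β 𝒱,
    fun W hW => isOpen_generateFrom_of_mem (pseudobase_subset_setOpenSubbasis hβα hcpt hher h𝒱 hW),
    mk_pseudobase_le hβ hκ₂ fun y hy => (hsep y hy).1,
    sInter_pseudobase_eq_singleton hβdense (fun A hA => hcpt A (hβα hA)) h𝒱
      fun y hy => (hsep y hy).2⟩

/-- **Theorem 2.6.** For regular `X`, `Y`, a hereditarily closed compact network `α` on `X`
closed under finite unions, and the set-open topology on `C(X,Y)`: for every continuous
`f : X → Y`, `ψ(f, C_α(X,Y)) ≤ wαc(X) · psw_e(f(X), Y)`, stated via arbitrary upper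
bounds `κ₁` for `wαc(X)` and `κ₂` for `psw_e(f(X), Y)`. -/
theorem psi_Calpha_le_wac_mul_pswe
    {X Y : Type u} [TopologicalSpace X] [TopologicalSpace Y] [T3Space X] [T3Space Y]
    (α : Set (Set X))
    (hnet : ∀ x : X, ∀ U : Set X, IsOpen U → x ∈ U → ∃ A ∈ α, x ∈ A ∧ A ⊆ U)
    (hcpt : ∀ A ∈ α, IsCompact A)
    (hher : ∀ A ∈ α, ∀ B ⊆ A, IsClosed B → B ∈ α)
    (hun : ∀ A ∈ α, ∀ B ∈ α, A ∪ B ∈ α)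
    (κ₁ κ₂ : Cardinal) (hκ₁ : ℵ₀ ≤ κ₁) (hκ₂ : ℵ₀ ≤ κ₂)
    -- wαc(X) ≤ κ₁
    (hwac : ∃ β ⊆ α, #β ≤ κ₁ ∧ Dense (⋃₀ β))
    (f : C(X, Y))
    -- psw_e(f(X), Y) ≤ κ₂
    (hpswe : ∃ 𝒱 : Set (Set Y), (∀ V ∈ 𝒱, IsOpen V) ∧
      ∀ y ∈ range f, #{V : Set Y // V ∈ 𝒱 ∧ y ∈ V} ≤ κ₂ ∧
        ⋂₀ {V ∈ 𝒱 | y ∈ V} = {y}) :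
    -- conclusion: ψ(f, C_α(X,Y)) ≤ κ₁ · κ₂
    letI T : TopologicalSpace C(X, Y) := TopologicalSpace.generateFrom
      {S : Set C(X, Y) | ∃ A ∈ α, ∃ V : Set Y, IsOpen V ∧ S = {g : C(X, Y) | g '' A ⊆ V}}
    ∃ 𝒲 : Set (Set C(X, Y)), (∀ W ∈ 𝒲, T.IsOpen W) ∧ #𝒲 ≤ κ₁ * κ₂ ∧
      ⋂₀ 𝒲 = {f} :=
  psi_Calpha_le_wac_mul_pswe_general α hcpt hher κ₁ κ₂ hκ₂ hwac f hpswe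
end

section
/- Let X, Y be topological spaces with Y regular Hausdorff, let A ⊆ X be compact, and let f, g : X → Y be continuous with g(A) ⊆ f(A). Suppose that for every pair G, U of open sets taken from a base of the subspace f(A) with cl(G) ∩ cl(U) = ∅ we have g(A ∩ f⁻¹(cl G)) ⊆ Y \ cl(U). Then g restricted to A equals f restricted to A. -/
open Set TopologicalSpace

/-- Key step of Theorem 2.1: if `g(A) ⊆ f(A)` for compact `A`, `Y` regular Hausdorff,
`B` is a base for the subspace `f(A)` (its members viewed as subsets of `Y`, closures
taken in `Y`), and `g(A ∩ f⁻¹(cl G)) ⊆ Y \ cl U` whenever `G, U ∈ B` have disjoint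
closures, then `g = f` on `A`. -/
theorem eqOn_of_base_separation
    {X Y : Type*} [TopologicalSpace X] [TopologicalSpace Y] [T3Space Y]
    {A : Set X} (hA : IsCompact A) {f g : X → Y}
    (hf : Continuous f) (hg : Continuous g)
    (hsub : g '' A ⊆ f '' A)
    (B : Set (Set Y)) (hBsub : ∀ G ∈ B, G ⊆ f '' A)
    (hBbasis : IsTopologicalBasis
      ((fun G => (Subtype.val : (f '' A) → Y) ⁻¹' G) '' B))
    (hsep : ∀ G ∈ B, ∀ U ∈ B, closure G ∩ closure U = ∅ →
      g '' (A ∩ f ⁻¹' closure G) ⊆ (closure U)ᶜ) :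
    EqOn f g A := by
  intro x hx
  by_contra hne
  -- Separate `f x` and `g x` by open sets with disjoint closures (T2.5 from T3).
  obtain ⟨V, W, hVo, hWo, hfV, hgW, hVW⟩ :
      ∃ V W : Set Y, IsOpen V ∧ IsOpen W ∧ f x ∈ V ∧ g x ∈ W ∧
        Disjoint (closure V) (closure W) := by
    have h25 : Disjoint ((nhds (f x)).lift' closure) ((nhds (g x)).lift' closure) :=
      disjoint_lift'_closure_nhds.mpr hne
    obtain ⟨V, hV, W, hW, hd⟩ := ((nhds (f x)).basis_sets.lift' (monotone_closure Y)).disjoint_iff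
      (((nhds (g x)).basis_sets.lift' (monotone_closure Y))) |>.mp h25
    obtain ⟨V', hV'V, hV'o, hfV'⟩ := mem_nhds_iff.mp hV
    obtain ⟨W', hW'W, hW'o, hgW'⟩ := mem_nhds_iff.mp hW
    exact ⟨V', W', hV'o, hW'o, hfV', hgW',
      hd.mono (closure_mono hV'V) (closure_mono hW'W)⟩
  -- `f x` and `g x` lie in `f '' A`.
  have hfxA : f x ∈ f '' A := ⟨x, hx, rfl⟩
  have hgxA : g x ∈ f '' A := hsub ⟨x, hx, rfl⟩
  -- Find basis elements `G, U ∈ B` around them inside `V`, `W`.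
  have getB : ∀ (p : Y) (hp : p ∈ f '' A) (S : Set Y), IsOpen S → p ∈ S →
      ∃ G ∈ B, p ∈ G ∧ G ⊆ S := by
    intro p hp S hSo hpS
    have hopen : IsOpen ((Subtype.val : (f '' A) → Y) ⁻¹' S) :=
      hSo.preimage continuous_subtype_val
    obtain ⟨t, ht, hpt, htS⟩ := hBbasis.exists_subset_of_mem_open
      (show (⟨p, hp⟩ : f '' A) ∈ _ from hpS) hopen
    obtain ⟨G, hGB, rfl⟩ := ht
    refine ⟨G, hGB, hpt, fun y hyG => ?_⟩
    have hyA : y ∈ f '' A := hBsub G hGB hyG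
    exact htS (show (⟨y, hyA⟩ : f '' A) ∈ _ from hyG)
  obtain ⟨G, hGB, hfG, hGV⟩ := getB (f x) hfxA V hVo hfV
  obtain ⟨U, hUB, hgU, hUW⟩ := getB (g x) hgxA W hWo hgW
  have hdisj : closure G ∩ closure U = ∅ := by
    have : Disjoint (closure G) (closure U) :=
      hVW.mono (closure_mono hGV) (closure_mono hUW)
    exact this.eq_bot
  have := hsep G hGB U hUB hdisj ⟨x, ⟨hx, subset_closure hfG⟩, rfl⟩
  exact this (subset_closure hgU)
end
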